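/- arXiv:math/0105230 — 7 statements merged into one kernel-verified Lean document; each statement's English description precedes it below -/
import Mathlib

section
/- Let G be a countable discrete group acting by homeomorphisms on a locally compact Hausdorff topological space X such that the orbit space X/G is a T1 space. Then every orbit Gx is a discrete subset of X. -/
/-!
Since `X/G` is T1, each orbit is the preimage of a closed point, hence closed in `X` and
therefore locally compact Hausdorff, so a Baire space. A countable T1 Baire space is the
countable union of its closed points, so one of them has nonempty interior, i.e. is isolated.
`G` acts transitively on the orbit by homeomorphisms, so then every point is isolated.
-/

open MulAction

theorem exists_isOpen_singleton_of_countable_of_baireSpace {Y : Type*} [TopologicalSpace Y]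
    [Countable Y] [T1Space Y] [BaireSpace Y] [Nonempty Y] : ∃ y : Y, IsOpen ({y} : Set Y) := by
  obtain ⟨y, hy⟩ := nonempty_interior_of_iUnion_of_closed (fun y : Y ↦ isClosed_singleton)
    (Set.iUnion_of_singleton Y)
  exact ⟨y, interior_eq_iff_isOpen.1 (hy.subset_singleton_iff.1 interior_subset)⟩

theorem MulAction.IsPretransitive.discreteTopology_of_countable_of_baireSpace (G : Type*)
    {Y : Type*} [Group G] [TopologicalSpace Y] [MulAction G Y] [ContinuousConstSMul G Y]
    [IsPretransitive G Y] [Countable Y] [T1Space Y] [BaireSpace Y] : DiscreteTopology Y := by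
  cases isEmpty_or_nonempty Y
  · infer_instance
  · obtain ⟨y, hy⟩ := exists_isOpen_singleton_of_countable_of_baireSpace (Y := Y)
    exact (IsPretransitive.discreteTopology_iff G y).2 hy

namespace MulAction

variable {G X : Type*} [Group G] [MulAction G X]

instance orbit.countable [Countable G] (x : X) : Countable (orbit G x) :=
  (Set.countable_range (· • x)).to_subtype

theorem orbit_eq_preimage_mk (x : X) :
    orbit G x = Quotient.mk (orbitRel G X) ⁻¹' {Quotient.mk _ x} := by
  ext y
  simp [Quotient.eq, orbitRel_apply]

variable [TopologicalSpace X]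

instance orbit.continuousConstSMul [ContinuousConstSMul G X] (x : X) :
    ContinuousConstSMul G (orbit G x) :=
  ⟨fun g ↦ ((continuous_const_smul g).comp continuous_subtype_val).subtype_mk _⟩

theorem isClosed_orbit [T1Space (Quotient (orbitRel G X))] (x : X) :
    IsClosed (orbit G x) := by
  rw [orbit_eq_preimage_mk]
  exact isClosed_singleton.preimage continuous_quotient_mk'

end MulAction

/-- A countable discrete group acting on a locally compact Hausdorff space with T1 orbit
space has discrete orbits. -/
theorem stmt1 {G X : Type*} [Group G] [Countable G] [TopologicalSpace X]
    [LocallyCompactSpace X] [T2Space X] [MulAction G X] [ContinuousConstSMul G X]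
    [T1Space (Quotient (MulAction.orbitRel G X))] :
    ∀ x : X, DiscreteTopology ↥(MulAction.orbit G x) := by
  intro x
  have : LocallyCompactSpace (orbit G x) := (isClosed_orbit x).locallyCompactSpace
  exact IsPretransitive.discreteTopology_of_countable_of_baireSpace G
end

section
/- Let G be a countable discrete group acting by homeomorphisms on a locally compact metrizable topological space X. If the action is perfect, then the orbit space X/G, with the quotient topology, is metrizable. -/
/-!
Cover `X` by a locally finite family of open sets `v i`, each inside a compact set, and link `i`
to `j` when some `G`-translate of `v i` meets `v j`. A compact set meets only finitely many `v j`
and `G` is countable, so every `i` has countably many neighbours; hence the union of the `v j` over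
a component of this relation is separable, and so is its `G`-saturation. The images of these unions
partition `X/G` into disjoint open sets. Each is second countable, being the open image of a
separable metrizable set, and regular, because proper discontinuity makes `X/G` locally compact
Hausdorff; so each is metrizable by Urysohn, and so is their disjoint union `X/G`.
-/

open Pointwise Set TopologicalSpace Relation

theorem Relation.countable_setOf_reflTransGen {α : Type*} {r : α → α → Prop}
    (h : ∀ a, {b | r a b}.Countable) (a : α) : {b | ReflTransGen r a b}.Countable := by
  let step : Set α → Set α := fun s => s ∪ ⋃ b ∈ s, {c | r b c}
  have hstep : ∀ n, (step^[n] {a}).Countable := by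
    intro n
    induction n with
    | zero => exact countable_singleton a
    | succ n ih =>
      rw [Function.iterate_succ_apply']
      exact ih.union (ih.biUnion fun b _ => h b)
  refine (countable_iUnion hstep).mono fun b hb => ?_
  induction hb with
  | refl => exact mem_iUnion.2 ⟨0, rfl⟩
  | tail _ hbc ih =>
    obtain ⟨n, hn⟩ := mem_iUnion.1 ih
    refine mem_iUnion.2 ⟨n + 1, ?_⟩
    rw [Function.iterate_succ_apply']
    exact Or.inr (mem_biUnion hn hbc)

theorem TopologicalSpace.MetrizableSpace.of_pairwiseDisjoint_isOpen_cover {X : Type*}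
    [TopologicalSpace X] {S : Set (Set X)} (hcover : ⋃₀ S = univ) (hdisj : S.PairwiseDisjoint id)
    (hopen : ∀ s ∈ S, IsOpen s) (hmetr : ∀ s ∈ S, MetrizableSpace s) : MetrizableSpace X := by
  let (s : S) : MetricSpace s := @metrizableSpaceMetric _ _ (hmetr s s.2)
  let := Metric.Sigma.metricSpace (E := fun s : S => (s : Set X))
  let F : (Σ s : S, (s : Set X)) → X := fun z => z.2
  have hF : F.Bijective := by
    refine ⟨?_, fun x => ?_⟩
    · rintro ⟨s, x, hxs⟩ ⟨t, y, hyt⟩ (rfl : x = y)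
      obtain rfl : s = t := Subtype.ext (hdisj.elim_set s.2 t.2 x hxs hyt)
      rfl
    · obtain ⟨s, hs, hxs⟩ := mem_sUnion.1 (hcover ▸ mem_univ x)
      exact ⟨⟨⟨s, hs⟩, x, hxs⟩, rfl⟩
  let e := (Equiv.ofBijective F hF).toHomeomorphOfContinuousOpen
    (continuous_sigma fun _ => continuous_subtype_val)
    (isOpenMap_sigma.2 fun s => (hopen s s.2).isOpenMap_subtype_val)
  exact e.symm.isEmbedding.metrizableSpace

theorem IsOpenQuotientMap.secondCountableTopology_of_isSeparable_preimage {X Y : Type*}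
    [TopologicalSpace X] [PseudoMetrizableSpace X] [TopologicalSpace Y] {p : X → Y}
    (hp : IsOpenQuotientMap p) {U : Set Y} (hU : IsSeparable (p ⁻¹' U)) :
    SecondCountableTopology U :=
  have := hU.secondCountableTopology
  (hp.restrictPreimage U).isQuotientMap.secondCountableTopology (hp.restrictPreimage U).isOpenMap

theorem exists_locallyFinite_isOpen_cover_subset_isCompact {X : Type*} [TopologicalSpace X]
    [WeaklyLocallyCompactSpace X] [ParacompactSpace X] :
    ∃ K v : X → Set X, (∀ x, IsCompact (K x)) ∧ (∀ x, IsOpen (v x)) ∧ (∀ x, v x ⊆ K x) ∧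
      ⋃ x, v x = univ ∧ LocallyFinite v := by
  choose K hKc hKn using fun x : X => exists_compact_mem_nhds x
  obtain ⟨v, hvo, hcov, hlf, hvK⟩ := precise_refinement (fun x => interior (K x))
    (fun _ => isOpen_interior)
    (iUnion_eq_univ_iff.2 fun x => ⟨x, mem_interior_iff_mem_nhds.2 (hKn x)⟩)
  exact ⟨K, v, hKc, hvo, fun x => (hvK x).trans interior_subset, hcov, hlf⟩

section TranslateAdj

variable (G : Type*) {X ι : Type*} [Group G] [MulAction G X]

def TranslateAdj (v : ι → Set X) (i j : ι) : Prop :=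
  ∃ g : G, (g • v i ∩ v j).Nonempty

instance (v : ι → Set X) : Std.Symm (TranslateAdj G v) where
  symm _ _ := fun ⟨g, _, ⟨y, hy, hyx⟩, hx⟩ =>
    ⟨g⁻¹, y, ⟨_, hx, by simp [← hyx]⟩, hy⟩

def translateComponent (v : ι → Set X) (i : ι) : Set X :=
  ⋃ j ∈ {j | ReflTransGen (TranslateAdj G v) i j}, v j

variable {G} {v : ι → Set X}

theorem subset_translateComponent (i : ι) : v i ⊆ translateComponent G v i :=
  subset_biUnion_of_mem (u := v) ReflTransGen.refl

theorem translateComponent_eq_of_smul_mem {i k : ι} {x : X} {g : G}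
    (hx : x ∈ translateComponent G v i) (hgx : g • x ∈ translateComponent G v k) :
    translateComponent G v i = translateComponent G v k := by
  obtain ⟨j, hij, hxj⟩ := mem_iUnion₂.1 hx
  obtain ⟨l, hkl, hxl⟩ := mem_iUnion₂.1 hgx
  have hik : ReflTransGen (TranslateAdj G v) i k :=
    (hij.tail ⟨g, g • x, smul_mem_smul_set hxj, hxl⟩).trans (symm hkl)
  unfold translateComponent
  congr! 3 with j
  exact ⟨(symm hik).trans, hik.trans⟩

variable [TopologicalSpace X] [ContinuousConstSMul G X] [Countable G] {K : ι → Set X}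

theorem TranslateAdj.countable_setOf (hK : ∀ i, IsCompact (K i)) (hvK : ∀ i, v i ⊆ K i)
    (hv : LocallyFinite v) (i : ι) : {j | TranslateAdj G v i j}.Countable := by
  refine (countable_iUnion fun g : G =>
    (hv.finite_nonempty_inter_compact ((hK i).smul g)).countable).mono ?_
  rintro j ⟨g, x, hxi, hxj⟩
  exact mem_iUnion.2 ⟨g, x, hxj, smul_set_mono (hvK i) hxi⟩

theorem isSeparable_translateComponent [PseudoMetrizableSpace X] (hK : ∀ i, IsCompact (K i))
    (hvK : ∀ i, v i ⊆ K i) (hv : LocallyFinite v) (i : ι) :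
    IsSeparable (translateComponent G v i) := by
  have := countable_setOf_reflTransGen (TranslateAdj.countable_setOf (G := G) hK hvK hv) i
  have := this.to_subtype
  rw [translateComponent, biUnion_eq_iUnion]
  exact isSeparable_iUnion.2 fun j => (hK j).isSeparable.mono (hvK j)

end TranslateAdj

theorem MulAction.exists_pairwiseDisjoint_isOpen_cover_quotient (G X : Type*) [Group G]
    [Countable G] [TopologicalSpace X] [WeaklyLocallyCompactSpace X] [MetrizableSpace X]
    [MulAction G X] [ContinuousConstSMul G X] :
    ∃ S : Set (Set (Quotient (orbitRel G X))), ⋃₀ S = univ ∧ S.PairwiseDisjoint id ∧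
      ∀ U ∈ S, IsOpen U ∧ IsSeparable (Quotient.mk _ ⁻¹' U) := by
  let := metrizableSpaceMetric X
  obtain ⟨K, v, hK, hvo, hvK, hcov, hv⟩ :=
    exists_locallyFinite_isOpen_cover_subset_isCompact (X := X)
  let p := Quotient.mk (orbitRel G X)
  refine ⟨range fun i => p '' translateComponent G v i, ?_, ?_, ?_⟩
  · refine sUnion_eq_univ_iff.2 fun q => ?_
    obtain ⟨x, rfl⟩ := Quotient.exists_rep q
    obtain ⟨i, hxi⟩ := mem_iUnion.1 (hcov ▸ mem_univ x)
    exact ⟨_, mem_range_self i, mem_image_of_mem p (subset_translateComponent i hxi)⟩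
  · rintro _ ⟨i, rfl⟩ _ ⟨k, rfl⟩ hne
    refine disjoint_left.2 ?_
    rintro _ ⟨x, hx, rfl⟩ ⟨y, hy, hxy⟩
    obtain ⟨g, rfl⟩ := Quotient.eq.1 hxy
    exact hne (congrArg _ (translateComponent_eq_of_smul_mem hx hy))
  · rintro _ ⟨i, rfl⟩
    refine ⟨isOpenQuotientMap_quotientMk.isOpenMap _ (isOpen_biUnion fun j _ => hvo j), ?_⟩
    have hW := isSeparable_translateComponent (G := G) hK hvK hv i
    refine (isSeparable_iUnion.2 fun g : G => hW.image (continuous_const_smul g)).mono ?_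
    exact (quotient_preimage_image_eq_union_mul _).subset

theorem stmt2_general {G X : Type*} [Group G] [Countable G] [TopologicalSpace X]
    [LocallyCompactSpace X] [TopologicalSpace.MetrizableSpace X]
    [MulAction G X] [ContinuousConstSMul G X]
    (hperfect : ∀ U V : Set X, IsCompact U → IsCompact V →
      {g : G | (g • U ∩ V).Nonempty}.Finite) :
    TopologicalSpace.MetrizableSpace (Quotient (MulAction.orbitRel G X)) := by
  have : ProperlyDiscontinuousSMul G X :=
    ⟨fun hK hL => by simpa only [image_smul] using hperfect _ _ hK hL⟩
  have : LocallyCompactSpace (Quotient (MulAction.orbitRel G X)) :=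
    MulAction.isOpenQuotientMap_quotientMk.locallyCompactSpace
  obtain ⟨S, hcover, hdisj, hS⟩ := MulAction.exists_pairwiseDisjoint_isOpen_cover_quotient G X
  refine .of_pairwiseDisjoint_isOpen_cover hcover hdisj (fun U hU => (hS U hU).1) fun U hU => ?_
  have := MulAction.isOpenQuotientMap_quotientMk.secondCountableTopology_of_isSeparable_preimage
    (hS U hU).2
  exact metrizableSpace_of_t3_secondCountable U

/-- A perfect action of a countable discrete group on a locally compact metrizable space
has a metrizable orbit space. -/
theorem stmt2 {G X : Type*} [Group G] [Countable G] [TopologicalSpace X]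
    [LocallyCompactSpace X] [TopologicalSpace.MetrizableSpace X]
    [MulAction G X] [FaithfulSMul G X] [ContinuousConstSMul G X]
    (hperfect : ∀ U V : Set X, IsCompact U → IsCompact V →
      {g : G | (g • U ∩ V).Nonempty}.Finite) :
    TopologicalSpace.MetrizableSpace (Quotient (MulAction.orbitRel G X)) :=
  stmt2_general hperfect
end

section
/- Let p : X̃ → X be a covering map, where X̃ is a connected topological space and X is a locally connected topological space whose topology is induced by a metric d. Then there exists a metric ρ on X̃ inducing the topology of X̃ such that p is locally isometric: every point of X̃ has an open neighbourhood U such that d(p(a), p(b)) = ρ(a,b) for all a, b ∈ U. -/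
/-!
Say that `x, x'` lie on a common sheet if one continuous section of `p` passes through both and
is defined on the balls around `p x`, `p x'` of a quarter of their "section radius" (the radius
of balls over which sections through every point exist). Let `ρ a b` be the infimum of the base
lengths `∑ d(p cᵢ, p cᵢ₊₁)` of chains `a = c₀, …, cₙ = b` of such steps. Nearby points lie on a
common sheet, so chains exist by connectedness of `E`; `d(p a, p b) ≤ ρ a b` by the triangle
inequality, with equality for a single step, which makes `p` a local isometry.

The section radius is 1-Lipschitz, hence bounded below near `p a`. A connected neighbourhood of
`p a` (local connectedness) then lies in the domain of every step taken close to `p a`, so by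
uniqueness of lifts a chain from `a` of small length never leaves the sheet through `a`. This
gives `ρ a b > 0` for `a ≠ b` in one fibre, and shows that small `ρ`-balls are small in `E`.
-/

open Metric Set Filter Topology

namespace CoveringMetric

variable {E X : Type*} [TopologicalSpace E]

section Sections

variable [TopologicalSpace X] {p : E → X} {f g : X → E} {D D' : Set X}

def IsSectionOn (p : E → X) (f : X → E) (D : Set X) : Prop :=
  ContinuousOn f D ∧ ∀ z ∈ D, p (f z) = z

def HasSectionsThrough (p : E → X) (D : Set X) : Prop :=
  ∀ e, p e ∈ D → ∃ f, IsSectionOn p f D ∧ f (p e) = e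

theorem IsSectionOn.mono (hf : IsSectionOn p f D) (h : D' ⊆ D) : IsSectionOn p f D' :=
  ⟨hf.1.mono h, fun z hz => hf.2 z (h hz)⟩

theorem HasSectionsThrough.mono (hD : HasSectionsThrough p D) (h : D' ⊆ D) :
    HasSectionsThrough p D' := fun e he =>
  let ⟨f, hf, hfe⟩ := hD e (h he)
  ⟨f, hf.mono h, hfe⟩

theorem _root_.IsCoveringMap.exists_mem_nhds_hasSectionsThrough (hp : IsCoveringMap p) (y : X) :
    ∃ U ∈ 𝓝 y, HasSectionsThrough p U := by
  cases isEmpty_or_nonempty (p ⁻¹' {y}) with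
  | inl _ =>
    obtain ⟨-, U, hyU, hU, -, H, -⟩ := hp y
    exact ⟨U, hU.mem_nhds hyU, fun e he => isEmptyElim (H ⟨e, he⟩).2⟩
  | inr _ =>
    let T := (hp y).toTrivialization
    refine ⟨T.baseSet, T.open_baseSet.mem_nhds (hp y).mem_toTrivialization_baseSet,
      fun e he => ⟨fun z => T.toOpenPartialHomeomorph.symm (z, (T e).2),
        ⟨T.continuousOn_symm_prodMk_left, fun z hz => T.proj_symm_apply' hz⟩,
        T.symm_apply_mk_proj (T.mem_source.2 he)⟩⟩

theorem _root_.IsCoveringMap.eqOn_of_isSectionOn (hp : IsCoveringMap p) (hf : IsSectionOn p f D)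
    (hg : IsSectionOn p g D) (hD : IsPreconnected D) {z : X} (hz : z ∈ D) (h : f z = g z) :
    EqOn f g D :=
  hp.eqOn_of_comp_eqOn hD hf.1 hg.1 (fun w hw => by simp [hf.2 w hw, hg.2 w hw]) hz h

theorem _root_.IsCoveringMap.eventually_apply_proj_eq (hp : IsCoveringMap p)
    (hf : IsSectionOn p f D) {e : E} (hD : D ∈ 𝓝 (p e)) (he : f (p e) = e) :
    ∀ᶠ x in 𝓝 e, f (p x) = x := by
  obtain ⟨V, hV, hinj⟩ := isLocallyInjective_iff_nhds.1 hp.isLocalHomeomorph.isLocallyInjective e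
  have hfp : ContinuousAt (f ∘ p) e := (hf.1.continuousAt hD).comp hp.continuous.continuousAt
  filter_upwards [hV, hfp.preimage_mem_nhds (he.symm ▸ hV),
    hp.continuous.continuousAt.preimage_mem_nhds hD] with x hxV hfxV hxD
  exact hinj hfxV hxV (hf.2 _ hxD)

end Sections

section PseudoMetric

variable [PseudoMetricSpace X] {p : E → X}

-- Capped at `1` so that the supremum is taken over a set bounded above.
noncomputable def sectionRadius (p : E → X) (y : X) : ℝ :=
  sSup {t | t ≤ 1 ∧ HasSectionsThrough p (ball y t)}

theorem le_sectionRadius {y : X} {t : ℝ} (ht : t ≤ 1) (h : HasSectionsThrough p (ball y t)) :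
    t ≤ sectionRadius p y :=
  le_csSup ⟨1, fun _ h => h.1⟩ ⟨ht, h⟩

theorem nonempty_sectionRadius_set (p : E → X) (y : X) :
    {t | t ≤ 1 ∧ HasSectionsThrough p (ball y t)}.Nonempty :=
  ⟨0, zero_le_one, fun e he => by simp at he⟩

theorem sectionRadius_le_one (p : E → X) (y : X) : sectionRadius p y ≤ 1 :=
  csSup_le (nonempty_sectionRadius_set p y) fun _ h => h.1

theorem hasSectionsThrough_ball_of_lt {y : X} {s : ℝ} (hs : s < sectionRadius p y) :
    HasSectionsThrough p (ball y s) := by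
  obtain ⟨t, ⟨-, ht⟩, hst⟩ :=
    exists_lt_of_lt_csSup (nonempty_sectionRadius_set p y) hs
  exact ht.mono (ball_subset_ball hst.le)

theorem sectionRadius_pos (hp : IsCoveringMap p) (y : X) : 0 < sectionRadius p y := by
  obtain ⟨U, hU, hsec⟩ := hp.exists_mem_nhds_hasSectionsThrough y
  obtain ⟨s, hs, hsU⟩ := Metric.mem_nhds_iff.1 hU
  exact (lt_min hs one_pos).trans_le <| le_sectionRadius (min_le_right _ _)
    (hsec.mono ((ball_subset_ball (min_le_left _ _)).trans hsU))

theorem sectionRadius_le_add_dist (p : E → X) (y y' : X) :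
    sectionRadius p y ≤ sectionRadius p y' + dist y y' := by
  refine le_of_forall_lt fun c hc => ?_
  obtain ⟨s, hcs, hs⟩ := exists_between hc
  have hsub : ball y' (s - dist y y') ⊆ ball y s := by
    intro w hw
    rw [mem_ball] at hw ⊢
    linarith [dist_triangle w y' y, dist_comm y y']
  have := le_sectionRadius (by linarith [sectionRadius_le_one p y, dist_nonneg (x := y) (y := y')])
    ((hasSectionsThrough_ball_of_lt hs).mono hsub)
  linarith

def OnCommonSheet (p : E → X) (x x' : E) : Prop :=
  ∃ f, IsSectionOn p f
      (ball (p x) (sectionRadius p (p x) / 4) ∪ ball (p x') (sectionRadius p (p x') / 4)) ∧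
    f (p x) = x ∧ f (p x') = x'

theorem OnCommonSheet.symm {x x' : E} (h : OnCommonSheet p x x') : OnCommonSheet p x' x :=
  let ⟨f, hf, hx, hx'⟩ := h
  ⟨f, union_comm _ _ ▸ hf, hx', hx⟩

theorem exists_isOpen_onCommonSheet (hp : IsCoveringMap p) (e : E) :
    ∃ O : Set E, IsOpen O ∧ e ∈ O ∧ ∀ x ∈ O, ∀ x' ∈ O, OnCommonSheet p x x' := by
  set r := sectionRadius p (p e)
  have hr : 0 < r := sectionRadius_pos hp _
  obtain ⟨f, hf, hfe⟩ :=
    hasSectionsThrough_ball_of_lt (half_lt_self hr) e (mem_ball_self (half_pos hr))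
  have hsub : ∀ z ∈ ball (p e) (r / 8), ball z (sectionRadius p z / 4) ⊆ ball (p e) (r / 2) := by
    intro z hz w hw
    rw [mem_ball] at hz hw ⊢
    linarith [sectionRadius_le_add_dist p z (p e), dist_triangle w z (p e)]
  have hnear : ∀ᶠ x in 𝓝 e, p x ∈ ball (p e) (r / 8) ∧ f (p x) = x :=
    Eventually.and (hp.continuous.continuousAt.preimage_mem_nhds (ball_mem_nhds _ (by positivity)))
      (hp.eventually_apply_proj_eq hf (ball_mem_nhds _ (half_pos hr)) hfe)
  obtain ⟨O, hOsub, hO, heO⟩ := mem_nhds_iff.1 hnear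
  exact ⟨O, hO, heO, fun x hx x' hx' =>
    ⟨f, hf.mono (union_subset (hsub _ (hOsub hx).1) (hsub _ (hOsub hx').1)),
      (hOsub hx).2, (hOsub hx').2⟩⟩

inductive HasChain (p : E → X) (a : E) : E → ℝ → Prop
  | refl : HasChain p a a 0
  | snoc {b x : E} {L : ℝ} :
      HasChain p a b L → OnCommonSheet p b x → HasChain p a x (L + dist (p b) (p x))

namespace HasChain

variable {a b c : E} {L L' : ℝ}

theorem single (h : OnCommonSheet p a b) : HasChain p a b (dist (p a) (p b)) := by
  simpa using refl.snoc h

theorem trans (h : HasChain p a b L) (h' : HasChain p b c L') : HasChain p a c (L + L') := by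
  induction h' with
  | refl => simpa using h
  | snoc _ hs ih => simpa [add_assoc] using ih.snoc hs

theorem symm (h : HasChain p a b L) : HasChain p b a L := by
  induction h with
  | refl => exact refl
  | snoc _ hs ih => simpa [dist_comm, add_comm] using (single hs.symm).trans ih

theorem dist_le (h : HasChain p a b L) : dist (p a) (p b) ≤ L := by
  induction h with
  | refl => simp
  | @snoc b x _ _ _ ih => linarith [dist_triangle (p a) (p b) (p x)]

end HasChain

theorem exists_hasChain [PreconnectedSpace E] (hp : IsCoveringMap p) (a b : E) :
    ∃ L, HasChain p a b L := by
  refine PreconnectedSpace.induction₂' (fun a b => ∃ L, HasChain p a b L) (fun x => ?_)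
    ⟨fun _ _ _ ⟨L, h⟩ ⟨L', h'⟩ => ⟨L + L', h.trans h'⟩⟩ a b
  obtain ⟨O, hO, hxO, hsheet⟩ := exists_isOpen_onCommonSheet hp x
  filter_upwards [hO.mem_nhds hxO] with y hy
  exact ⟨⟨_, .single (hsheet x hxO y hy)⟩, ⟨_, .single (hsheet y hy x hxO)⟩⟩

noncomputable def chainDist (p : E → X) (a b : E) : ℝ :=
  sInf {L | HasChain p a b L}

variable {a b : E}

theorem chainDist_le {L : ℝ} (h : HasChain p a b L) : chainDist p a b ≤ L :=
  csInf_le ⟨0, fun _ h => dist_nonneg.trans h.dist_le⟩ h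

theorem chainDist_le_dist_of_onCommonSheet (h : OnCommonSheet p a b) :
    chainDist p a b ≤ dist (p a) (p b) :=
  chainDist_le (.single h)

theorem chainDist_comm (p : E → X) (a b : E) : chainDist p a b = chainDist p b a := by
  simp only [chainDist]
  congr 1
  ext L
  exact ⟨HasChain.symm, HasChain.symm⟩

variable [PreconnectedSpace E]

theorem exists_hasChain_lt (hp : IsCoveringMap p) {ε : ℝ} (h : chainDist p a b < ε) :
    ∃ L < ε, HasChain p a b L :=
  let ⟨L, hL, hLε⟩ := exists_lt_of_csInf_lt (exists_hasChain hp a b) h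
  ⟨L, hLε, hL⟩

theorem dist_le_chainDist (hp : IsCoveringMap p) (a b : E) : dist (p a) (p b) ≤ chainDist p a b :=
  le_csInf (exists_hasChain hp a b) fun _ h => h.dist_le

theorem chainDist_nonneg (hp : IsCoveringMap p) (a b : E) : 0 ≤ chainDist p a b :=
  dist_nonneg.trans (dist_le_chainDist hp a b)

theorem chainDist_self (hp : IsCoveringMap p) (a : E) : chainDist p a a = 0 :=
  (chainDist_le .refl).antisymm (chainDist_nonneg hp a a)

theorem chainDist_triangle (hp : IsCoveringMap p) (a b c : E) :
    chainDist p a c ≤ chainDist p a b + chainDist p b c := by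
  refine le_of_forall_pos_lt_add fun ε hε => ?_
  obtain ⟨L, hL, h⟩ :=
    exists_hasChain_lt hp (lt_add_of_pos_right (chainDist p a b) (half_pos hε))
  obtain ⟨L', hL', h'⟩ :=
    exists_hasChain_lt hp (lt_add_of_pos_right (chainDist p b c) (half_pos hε))
  linarith [chainDist_le (h.trans h')]

end PseudoMetric

section SheetFollowing

variable [PseudoMetricSpace X] {p : E → X} {a b : E}

theorem HasChain.apply_proj_eq_of_lt (hp : IsCoveringMap p) {f₀ : X → E} {B : Set X}
    (hf₀ : IsSectionOn p f₀ B) (hB : IsPreconnected B) {θ : ℝ} (hθB : ball (p a) θ ⊆ B)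
    (hBrad : ∀ z ∈ ball (p a) θ, B ⊆ ball z (sectionRadius p z / 4)) (ha : f₀ (p a) = a)
    {L : ℝ} (h : HasChain p a b L) (hL : L < θ) : f₀ (p b) = b := by
  induction h with
  | refl => exact ha
  | @snoc b x L hchain hstep ih =>
    have hb : f₀ (p b) = b := ih (by linarith [dist_nonneg (x := p b) (y := p x)])
    have hbθ : p b ∈ ball (p a) θ := by
      rw [mem_ball, dist_comm]; linarith [hchain.dist_le, dist_nonneg (x := p b) (y := p x)]
    have hxθ : p x ∈ ball (p a) θ := by
      rw [mem_ball, dist_comm]; linarith [(hchain.snoc hstep).dist_le]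
    obtain ⟨g, hg, hgb, hgx⟩ := hstep
    have hgB : IsSectionOn p g B := hg.mono ((hBrad _ hbθ).trans subset_union_left)
    rw [hp.eqOn_of_isSectionOn hf₀ hgB hB (hθB hbθ) (hb.trans hgb.symm) (hθB hxθ), hgx]

theorem exists_forall_hasChain_lt [LocallyConnectedSpace X] (hp : IsCoveringMap p) (a : E) :
    ∃ θ > 0, ∃ f₀ : X → E, ContinuousAt f₀ (p a) ∧
      ∀ b L, HasChain p a b L → L < θ → f₀ (p b) = b := by
  set r := sectionRadius p (p a)
  have hr : 0 < r := sectionRadius_pos hp _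
  obtain ⟨f₀, hf₀, hf₀a⟩ :=
    hasSectionsThrough_ball_of_lt (half_lt_self hr) a (mem_ball_self (half_pos hr))
  obtain ⟨B, hBsub, hBo, haB, hBc⟩ := locallyConnectedSpace_iff_subsets_isOpen_isConnected.1
    ‹_› (p a) (ball (p a) (r / 16)) (ball_mem_nhds _ (by positivity))
  obtain ⟨θ, hθ, hθB⟩ := Metric.isOpen_iff.1 hBo (p a) haB
  have hBrad : ∀ z ∈ ball (p a) θ, B ⊆ ball z (sectionRadius p z / 4) := by
    intro z hz w hw
    have hz' := hBsub (hθB hz)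
    have hw' := hBsub hw
    rw [mem_ball] at hz' hw' ⊢
    linarith [sectionRadius_le_add_dist p (p a) z, dist_triangle w (p a) z, dist_comm z (p a)]
  refine ⟨θ, hθ, f₀, hf₀.1.continuousAt (ball_mem_nhds _ (half_pos hr)), fun b L h hL => ?_⟩
  exact h.apply_proj_eq_of_lt hp (hf₀.mono (hBsub.trans (ball_subset_ball (by linarith))))
    hBc.isPreconnected hθB hBrad hf₀a hL

theorem isOpen_iff_chainDist [PreconnectedSpace E] [LocallyConnectedSpace X]
    (hp : IsCoveringMap p) (s : Set E) :
    IsOpen s ↔ ∀ a ∈ s, ∃ ε > 0, {b | chainDist p a b < ε} ⊆ s := by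
  refine ⟨fun hs a ha => ?_, fun h => isOpen_iff_mem_nhds.2 fun a ha => ?_⟩
  · obtain ⟨θ, hθ, f₀, hf₀, hchain⟩ := exists_forall_hasChain_lt hp a
    have hf₀a : f₀ (p a) = a := hchain a 0 .refl hθ
    obtain ⟨γ, hγ, hγs⟩ := Metric.mem_nhds_iff.1 (hf₀.preimage_mem_nhds (hf₀a ▸ hs.mem_nhds ha))
    refine ⟨min θ γ, lt_min hθ hγ, fun b hb => ?_⟩
    obtain ⟨L, hL, hab⟩ := exists_hasChain_lt hp hb
    have hbγ : p b ∈ ball (p a) γ := by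
      rw [mem_ball, dist_comm]; linarith [hab.dist_le, min_le_right θ γ]
    rw [← hchain b L hab (hL.trans_le (min_le_left _ _))]
    exact hγs hbγ
  · obtain ⟨ε, hε, hεs⟩ := h a ha
    obtain ⟨O, hO, haO, hsheet⟩ := exists_isOpen_onCommonSheet hp a
    refine mem_of_superset (inter_mem (hO.mem_nhds haO)
      (hp.continuous.continuousAt.preimage_mem_nhds (ball_mem_nhds _ hε))) ?_
    rintro b ⟨hbO, hb⟩
    rw [mem_preimage, mem_ball, dist_comm] at hb
    exact hεs ((chainDist_le_dist_of_onCommonSheet (hsheet a haO b hbO)).trans_lt hb)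

end SheetFollowing

theorem chainDist_eq_zero_iff {E X : Type*} [TopologicalSpace E] [MetricSpace X]
    [PreconnectedSpace E] [LocallyConnectedSpace X] {p : E → X} (hp : IsCoveringMap p)
    {a b : E} : chainDist p a b = 0 ↔ a = b := by
  refine ⟨fun h => ?_, fun h => h ▸ chainDist_self hp a⟩
  obtain ⟨θ, hθ, f₀, -, hchain⟩ := exists_forall_hasChain_lt hp a
  obtain ⟨L, hL, hab⟩ := exists_hasChain_lt hp (h.trans_lt hθ)
  have hpab : p a = p b := dist_le_zero.1 (h ▸ dist_le_chainDist hp a b)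
  rw [← hchain b L hab hL, ← hpab, hchain a 0 .refl hθ]

end CoveringMetric

open CoveringMetric

/-- Any metric on the base of a covering map with connected total space and locally
connected base lifts to a metric on the total space making the projection a local
isometry. -/
theorem stmt3 {E X : Type*} [TopologicalSpace E] [MetricSpace X]
    [ConnectedSpace E] [LocallyConnectedSpace X]
    (p : E → X) (hcov : IsCoveringMap p) :
    ∃ ρ : E → E → ℝ,
      (∀ a b : E, 0 ≤ ρ a b) ∧
      (∀ a b : E, ρ a b = 0 ↔ a = b) ∧
      (∀ a b : E, ρ a b = ρ b a) ∧
      (∀ a b c : E, ρ a c ≤ ρ a b + ρ b c) ∧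
      (∀ s : Set E, IsOpen s ↔ ∀ a ∈ s, ∃ ε > 0, {b : E | ρ a b < ε} ⊆ s) ∧
      (∀ x : E, ∃ U : Set E, IsOpen U ∧ x ∈ U ∧
        ∀ a ∈ U, ∀ b ∈ U, dist (p a) (p b) = ρ a b) := by
  refine ⟨chainDist p, chainDist_nonneg hcov, fun _ _ => chainDist_eq_zero_iff hcov,
    chainDist_comm p, chainDist_triangle hcov, isOpen_iff_chainDist hcov, fun e => ?_⟩
  obtain ⟨O, hO, heO, hsheet⟩ := exists_isOpen_onCommonSheet hcov e
  exact ⟨O, hO, heO, fun a ha b hb => (dist_le_chainDist hcov a b).antisymm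
    (chainDist_le_dist_of_onCommonSheet (hsheet a ha b hb))⟩
end

section
/- Let φ : G̃ → G be a surjective group homomorphism, let the group G act by homeomorphisms on a topological space X and the group G̃ act by homeomorphisms on a connected topological space X̃, and let p : X̃ → X be a covering map satisfying p(g̃•x̃) = φ(g̃)•p(x̃) for all g̃ ∈ G̃ and x̃ ∈ X̃. Suppose X is locally connected and d is a G-invariant metric on X inducing its topology. Then there exists a G̃-invariant metric ρ on X̃ inducing the topology of X̃ such that p is locally isometric: every point of X̃ has an open neighbourhood U with d(p(a), p(b)) = ρ(a,b) for all a, b ∈ U. -/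
/-!
Call `V ⊆ X` sheeted if `p` is injective on every preconnected subset of `p ⁻¹' V`. Evenly
covered sets are sheeted, so `sheetRadius p u`, the supremum of the radii `≤ 1` of sheeted balls
around `u`, is positive; it is also `1`-Lipschitz and invariant under the action. Two points are
linked when a preconnected set containing both projects into the balls of a quarter sheet radius
around both images, and `ρ` is the largest pseudometric below the weight `d (p a) (p b)` on linked
pairs and `1` on the others. A chain of weight `< sheetRadius p (p a) / 100` from `a` consists of
linked steps, so it sweeps out a preconnected set over the sheeted ball of half the sheet radius
around `p a`. Hence `d (p a) (p b) ≤ ρ a b` near the diagonal, and `p` is injective along such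
chains, which separates points and puts small `ρ`-balls inside open sets. Conversely, `E` is
locally connected, and in a small connected neighbourhood all pairs are linked, so `ρ = d ∘ p`.
-/

open Set Metric
open scoped Pointwise NNReal Topology

namespace PseudoMetricSpace

variable {α : Type*} {d : α → α → ℝ≥0} {dist_self : ∀ x, d x x = 0}
  {dist_comm : ∀ x y, d x y = d y x}

theorem dist_ofPreNNDist_map_le (f : α → α) (hf : ∀ x y, d (f x) (f y) = d x y) (x y : α) :
    @dist α (ofPreNNDist d dist_self dist_comm).toDist (f x) (f y) ≤
      @dist α (ofPreNNDist d dist_self dist_comm).toDist x y := by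
  rw [dist_ofPreNNDist, dist_ofPreNNDist, NNReal.coe_le_coe]
  refine le_ciInf fun l => (ciInf_le (OrderBot.bddBelow _) (l.map f)).trans_eq ?_
  rw [← List.map_cons, ← List.map_singleton, ← List.map_append, List.zipWith_map]
  simp only [hf]

theorem exists_sum_lt_of_dist_ofPreNNDist_lt {x y : α} {r : ℝ}
    (h : @dist α (ofPreNNDist d dist_self dist_comm).toDist x y < r) :
    ∃ l : List α, (((x :: l).zipWith d (l ++ [y])).sum : ℝ) < r := by
  lift r to ℝ≥0 using (@dist_nonneg α (ofPreNNDist d dist_self dist_comm) x y).trans h.le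
  rw [dist_ofPreNNDist, NNReal.coe_lt_coe] at h
  simpa only [NNReal.coe_lt_coe] using exists_lt_of_ciInf_lt h

theorem mem_of_dist_ofPreNNDist_lt {S : Set α} {φ : α → ℝ} {c : ℝ}
    (hstep : ∀ x ∈ S, ∀ z, φ x + d x z < c → z ∈ S ∧ φ z ≤ φ x + d x z) {x y : α} (hx : x ∈ S)
    (h : φ x + @dist α (ofPreNNDist d dist_self dist_comm).toDist x y < c) :
    y ∈ S ∧ φ y ≤ φ x + @dist α (ofPreNNDist d dist_self dist_comm).toDist x y := by
  have chain : ∀ (l : List α) x, x ∈ S → φ x + (((x :: l).zipWith d (l ++ [y])).sum : ℝ) < c →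
      y ∈ S ∧ φ y ≤ φ x + ((x :: l).zipWith d (l ++ [y])).sum := by
    intro l
    induction l with
    | nil => exact fun x hx h => by simpa using hstep x hx y (by simpa using h)
    | cons z l ih =>
      intro x hx hlt
      simp only [List.cons_append, List.zipWith_cons_cons, List.sum_cons, NNReal.coe_add] at hlt ⊢
      have hl : (0 : ℝ) ≤ ((z :: l).zipWith d (l ++ [y])).sum := NNReal.coe_nonneg _
      obtain ⟨hz, hφz⟩ := hstep x hx z (by linarith)
      obtain ⟨hy, hφy⟩ := ih z hz (by linarith)
      exact ⟨hy, by linarith⟩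
  set ρ := @dist α (ofPreNNDist d dist_self dist_comm).toDist x y
  have key : ∀ ε > 0, y ∈ S ∧ φ y < φ x + ρ + ε := by
    intro ε hε
    obtain ⟨l, hl⟩ := exists_sum_lt_of_dist_ofPreNNDist_lt (x := x) (y := y)
      (r := ρ + min ε (c - φ x - ρ)) (lt_add_of_pos_right _ (lt_min hε (by linarith)))
    obtain ⟨hy, hφy⟩ := chain l x hx (by linarith [min_le_right ε (c - φ x - ρ)])
    exact ⟨hy, by linarith [min_le_left ε (c - φ x - ρ)]⟩
  exact ⟨(key 1 one_pos).1, le_of_forall_pos_lt_add fun ε hε => by linarith [(key ε hε).2]⟩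

end PseudoMetricSpace

theorem IsLocalHomeomorph.locallyConnectedSpace {α β : Type*} [TopologicalSpace α]
    [TopologicalSpace β] [LocallyConnectedSpace β] {f : α → β} (hf : IsLocalHomeomorph f) :
    LocallyConnectedSpace α := by
  choose e hxe _ using hf
  refine locallyConnectedSpace_of_connected_bases (fun x s ↦ (e x).symm '' s)
      (fun x s ↦ (IsOpen s ∧ e x x ∈ s ∧ IsConnected s) ∧ s ⊆ (e x).target) (fun x ↦ ?_) ?_
  · simpa only [(e x).symm_map_nhds_eq (hxe x), id] using
      ((LocallyConnectedSpace.open_connected_basis (e x x)).restrict_subset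
        ((e x).open_target.mem_nhds ((e x).map_source (hxe x)))).map (e x).symm
  · rintro x s ⟨⟨-, -, hsconn⟩, hssubset⟩
    exact hsconn.isPreconnected.image _ ((e x).continuousOn_symm.mono hssubset)

section Sheets

variable {E X : Type*} [TopologicalSpace E] (p : E → X)

def InjOnPreconnectedOver (V : Set X) : Prop :=
  ∀ ⦃C : Set E⦄, IsPreconnected C → C ⊆ p ⁻¹' V → InjOn p C

variable {p}

theorem InjOnPreconnectedOver.mono {U V : Set X} (hV : InjOnPreconnectedOver p V) (hUV : U ⊆ V) :
    InjOnPreconnectedOver p U :=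
  fun _ hC hCU => hV hC (hCU.trans (preimage_mono hUV))

theorem injOnPreconnectedOver_empty : InjOnPreconnectedOver p ∅ := fun C _ hC => by
  rw [preimage_empty, subset_empty_iff] at hC
  exact hC ▸ injOn_empty p

theorem InjOnPreconnectedOver.smul {G : Type*} [Group G] [MulAction G E] [MulAction G X]
    [ContinuousConstSMul G E] (hp : ∀ (g : G) (e : E), p (g • e) = g • p e) {V : Set X}
    (hV : InjOnPreconnectedOver p V) (g : G) : InjOnPreconnectedOver p (g • V) := by
  intro C hC hCV e he e' he' hpe
  have hC' : IsPreconnected (g⁻¹ • C) := hC.image _ (continuous_const_smul _).continuousOn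
  have hCV' : g⁻¹ • C ⊆ p ⁻¹' V := by
    rintro _ ⟨c, hc, rfl⟩
    simpa [hp, mem_smul_set_iff_inv_smul_mem] using hCV hc
  simpa using hV hC' hCV' (smul_mem_smul_set he) (smul_mem_smul_set he') (by simp [hp, hpe])

theorem IsEvenlyCovered.exists_mem_nhds_injOnPreconnectedOver [TopologicalSpace X] {x : X}
    {I : Type*} [TopologicalSpace I] (h : IsEvenlyCovered p x I) :
    ∃ U ∈ 𝓝 x, InjOnPreconnectedOver p U := by
  obtain ⟨_, U, hxU, hU, -, H, hH⟩ := h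
  refine ⟨U, hU.mem_nhds hxU, fun C hC hCU e he e' he' hpe => ?_⟩
  have hC' : IsPreconnected (Subtype.val ⁻¹' C : Set (p ⁻¹' U)) := by
    rwa [← Topology.IsInducing.subtypeVal.isPreconnected_image, Subtype.image_preimage_coe,
      inter_eq_right.2 hCU]
  -- the sheet index is locally constant, hence constant on the preconnected set `C`
  have hsheet : (H ⟨e, hCU he⟩).2 = (H ⟨e', hCU he'⟩).2 :=
    hC'.constant (continuous_snd.comp H.continuous).continuousOn he he'
  exact congrArg Subtype.val <| H.injective <| Prod.ext (Subtype.ext (by simp [hH, hpe])) hsheet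

end Sheets

section SheetRadius

variable {E X : Type*} [TopologicalSpace E] [MetricSpace X] {p : E → X}

theorem IsCoveringMap.exists_ball_injOnPreconnectedOver (hp : IsCoveringMap p) (u : X) :
    ∃ r > 0, InjOnPreconnectedOver p (ball u r) := by
  obtain ⟨U, hU, hpU⟩ := (hp u).exists_mem_nhds_injOnPreconnectedOver
  obtain ⟨r, hr, hrU⟩ := Metric.mem_nhds_iff.1 hU
  exact ⟨r, hr, hpU.mono hrU⟩

variable (p) in
def sheetRadii (u : X) : Set ℝ :=
  {r | r ≤ 1 ∧ InjOnPreconnectedOver p (ball u r)}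

variable (p) in
noncomputable def sheetRadius (u : X) : ℝ :=
  sSup (sheetRadii p u)

theorem zero_mem_sheetRadii (u : X) : 0 ∈ sheetRadii p u :=
  ⟨zero_le_one, by simpa using injOnPreconnectedOver_empty⟩

theorem bddAbove_sheetRadii (u : X) : BddAbove (sheetRadii p u) :=
  ⟨1, fun _ hr => hr.1⟩

theorem sheetRadius_nonneg (u : X) : 0 ≤ sheetRadius p u :=
  le_csSup (bddAbove_sheetRadii u) (zero_mem_sheetRadii u)

theorem sheetRadius_le_one (u : X) : sheetRadius p u ≤ 1 :=
  csSup_le ⟨0, zero_mem_sheetRadii u⟩ fun _ hr => hr.1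

theorem IsCoveringMap.sheetRadius_pos (hp : IsCoveringMap p) (u : X) : 0 < sheetRadius p u := by
  obtain ⟨r, hr, hpr⟩ := hp.exists_ball_injOnPreconnectedOver u
  exact (lt_min hr one_pos).trans_le <| le_csSup (bddAbove_sheetRadii u)
    ⟨min_le_right _ _, hpr.mono (ball_subset_ball (min_le_left _ _))⟩

theorem injOnPreconnectedOver_ball_of_lt_sheetRadius {u : X} {r : ℝ} (hr : r < sheetRadius p u) :
    InjOnPreconnectedOver p (ball u r) := by
  obtain ⟨r', ⟨-, hr'⟩, hrr'⟩ := exists_lt_of_lt_csSup ⟨0, zero_mem_sheetRadii u⟩ hr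
  exact hr'.mono (ball_subset_ball hrr'.le)

theorem sheetRadius_le_add_dist (u v : X) : sheetRadius p u ≤ sheetRadius p v + dist u v := by
  refine csSup_le ⟨0, zero_mem_sheetRadii u⟩ fun r ⟨hr1, hr⟩ => ?_
  have hv : r - dist u v ≤ sheetRadius p v :=
    le_csSup (bddAbove_sheetRadii v) ⟨by linarith [dist_nonneg (x := u) (y := v)],
      hr.mono fun w hw => by rw [mem_ball] at hw ⊢; linarith [dist_triangle w v u, dist_comm u v]⟩
  linarith

theorem sheetRadius_smul {G : Type*} [Group G] [MulAction G E] [MulAction G X]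
    [ContinuousConstSMul G E] [IsIsometricSMul G X] (hp : ∀ (g : G) (e : E), p (g • e) = g • p e)
    (g : G) (u : X) : sheetRadius p (g • u) = sheetRadius p u := by
  have key : ∀ (g : G) (u : X) (r : ℝ), InjOnPreconnectedOver p (ball u r) →
      InjOnPreconnectedOver p (ball (g • u) r) := fun g u r h => smul_ball g u r ▸ h.smul hp g
  have : sheetRadii p (g • u) = sheetRadii p u := by
    ext r
    exact and_congr_right' ⟨fun h => by simpa using key g⁻¹ _ r h, key g u r⟩
  rw [sheetRadius, sheetRadius, this]

end SheetRadius

section LiftDist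

variable {E X : Type*} [TopologicalSpace E] [MetricSpace X] {p : E → X}

variable (p) in
def SheetLinked (a b : E) : Prop :=
  ∃ C, IsPreconnected C ∧ a ∈ C ∧ b ∈ C ∧
    p '' C ⊆ closedBall (p a) (sheetRadius p (p a) / 4) ∩ closedBall (p b) (sheetRadius p (p b) / 4)

theorem sheetLinked_refl (a : E) : SheetLinked p a a :=
  ⟨{a}, isPreconnected_singleton, rfl, rfl, by
    simp [div_nonneg (sheetRadius_nonneg (p := p) (p a)) zero_le_four]⟩

theorem SheetLinked.symm {a b : E} (h : SheetLinked p a b) : SheetLinked p b a :=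
  let ⟨C, hC, ha, hb, hCab⟩ := h
  ⟨C, hC, hb, ha, hCab.trans_eq (inter_comm _ _)⟩

theorem sheetLinked_comm (a b : E) : SheetLinked p a b ↔ SheetLinked p b a :=
  ⟨.symm, .symm⟩

theorem SheetLinked.smul {G : Type*} [Group G] [MulAction G E] [MulAction G X]
    [ContinuousConstSMul G E] [IsIsometricSMul G X] (hp : ∀ (g : G) (e : E), p (g • e) = g • p e)
    {a b : E} (h : SheetLinked p a b) (g : G) : SheetLinked p (g • a) (g • b) := by
  obtain ⟨C, hC, ha, hb, hCab⟩ := h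
  refine ⟨g • C, hC.image _ (continuous_const_smul g).continuousOn, smul_mem_smul_set ha,
    smul_mem_smul_set hb, ?_⟩
  rintro _ ⟨_, ⟨c, hc, rfl⟩, rfl⟩
  have := hCab (mem_image_of_mem p hc)
  simpa [hp, sheetRadius_smul hp] using this

-- Unlinked pairs weigh `1`: the distance built from these weights is truncated at `1`, and a chain
-- of total weight below `1` consists of linked steps only.
open Classical in
variable (p) in
noncomputable def linkWeight (a b : E) : ℝ≥0 :=
  if SheetLinked p a b then nndist (p a) (p b) else 1

theorem sheetLinked_of_linkWeight_lt_one {a b : E} (h : linkWeight p a b < 1) :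
    SheetLinked p a b ∧ (linkWeight p a b : ℝ) = dist (p a) (p b) := by
  unfold linkWeight at h ⊢
  split_ifs at h ⊢ with hab
  · exact ⟨hab, coe_nndist _ _⟩
  · exact absurd h (lt_irrefl 1)

variable (p) in
noncomputable abbrev liftPseudoMetric : PseudoMetricSpace E :=
  PseudoMetricSpace.ofPreNNDist (linkWeight p) (fun a => by simp [linkWeight, sheetLinked_refl])
    fun a b => by rw [linkWeight, linkWeight, sheetLinked_comm, nndist_comm]

variable (p) in
noncomputable def liftDist : E → E → ℝ := @dist E (liftPseudoMetric p).toDist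

theorem liftDist_le_dist_of_sheetLinked {a b : E} (h : SheetLinked p a b) :
    liftDist p a b ≤ dist (p a) (p b) :=
  (PseudoMetricSpace.dist_ofPreNNDist_le _ _ _ a b).trans_eq (by simp [linkWeight, h])

theorem liftDist_smul {G : Type*} [Group G] [MulAction G E] [MulAction G X]
    [ContinuousConstSMul G E] [IsIsometricSMul G X] (hp : ∀ (g : G) (e : E), p (g • e) = g • p e)
    (g : G) (a b : E) : liftDist p (g • a) (g • b) = liftDist p a b := by
  have hw : ∀ (g : G) (a b : E), linkWeight p (g • a) (g • b) = linkWeight p a b := by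
    intro g a b
    have : SheetLinked p (g • a) (g • b) ↔ SheetLinked p a b :=
      ⟨fun h => by simpa using h.smul hp g⁻¹, fun h => h.smul hp g⟩
    by_cases h : SheetLinked p a b <;> simp [linkWeight, h, this, hp]
  refine le_antisymm (PseudoMetricSpace.dist_ofPreNNDist_map_le _ (hw g) a b) ?_
  have : liftDist p (g⁻¹ • g • a) (g⁻¹ • g • b) ≤ liftDist p (g • a) (g • b) :=
    PseudoMetricSpace.dist_ofPreNNDist_map_le _ (hw g⁻¹) _ _
  rwa [inv_smul_smul, inv_smul_smul] at this

theorem exists_isPreconnected_of_liftDist_lt {a b : E}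
    (h : liftDist p a b < sheetRadius p (p a) / 100) :
    (∃ K, IsPreconnected K ∧ a ∈ K ∧ b ∈ K ∧ K ⊆ p ⁻¹' ball (p a) (sheetRadius p (p a) / 2)) ∧
      dist (p a) (p b) ≤ liftDist p a b := by
  set r := sheetRadius p (p a)
  have hr : 0 < r := by linarith [(@dist_nonneg E (liftPseudoMetric p) a b).trans_lt h]
  let S := {x | ∃ K, IsPreconnected K ∧ a ∈ K ∧ x ∈ K ∧ K ⊆ p ⁻¹' ball (p a) (r / 2)}
  have hstep : ∀ x ∈ S, ∀ z, dist (p a) (p x) + linkWeight p x z < r / 100 →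
      z ∈ S ∧ dist (p a) (p z) ≤ dist (p a) (p x) + linkWeight p x z := by
    rintro x ⟨K, hK, haK, hxK, hKB⟩ z hxz
    have hax : 0 ≤ dist (p a) (p x) := dist_nonneg
    have hw : linkWeight p x z < 1 := by
      rw [← NNReal.coe_lt_coe, NNReal.coe_one]
      linarith [sheetRadius_le_one (p := p) (p a)]
    obtain ⟨⟨C, hC, hxC, hzC, hCxz⟩, hwd⟩ := sheetLinked_of_linkWeight_lt_one hw
    rw [hwd] at hxz ⊢
    refine ⟨⟨K ∪ C, hK.union x hxK hxC hC, .inl haK, .inr hzC, union_subset hKB ?_⟩,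
      dist_triangle _ _ _⟩
    intro y hy
    have hyx : dist (p y) (p x) ≤ sheetRadius p (p x) / 4 := (hCxz (mem_image_of_mem p hy)).1
    have hrx := sheetRadius_le_add_dist (p := p) (p x) (p a)
    rw [mem_preimage, mem_ball]
    linarith [dist_triangle (p y) (p x) (p a), dist_comm (p x) (p a)]
  have haS : a ∈ S := ⟨{a}, isPreconnected_singleton, rfl, rfl, by simpa using half_pos hr⟩
  have := PseudoMetricSpace.mem_of_dist_ofPreNNDist_lt hstep haS (y := b)
    (by rwa [dist_self, zero_add])
  rw [dist_self, zero_add] at this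
  exact this

theorem IsCoveringMap.eq_of_liftDist_eq_zero (hp : IsCoveringMap p) {a b : E}
    (h : liftDist p a b = 0) : a = b := by
  have hr := hp.sheetRadius_pos (p a)
  obtain ⟨⟨K, hK, haK, hbK, hKB⟩, hab⟩ := exists_isPreconnected_of_liftDist_lt (p := p)
    (a := a) (b := b) (by rw [h]; positivity)
  exact injOnPreconnectedOver_ball_of_lt_sheetRadius (half_lt_self hr) hK hKB haK hbK
    (dist_le_zero.1 (h ▸ hab))

variable [LocallyConnectedSpace E]

theorem IsCoveringMap.exists_isOpen_forall_liftDist_eq (hp : IsCoveringMap p) (x : E) {r : ℝ}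
    (hr : 0 < r) : ∃ U, IsOpen U ∧ x ∈ U ∧ U ⊆ p ⁻¹' ball (p x) r ∧
      ∀ a ∈ U, ∀ b ∈ U, liftDist p a b = dist (p a) (p b) := by
  -- at this scale any `a b ∈ U` are linked, with `dist (p a) (p b) < sheetRadius p (p a) / 100`
  set s := min r (sheetRadius p (p x) / 1000)
  have hs : 0 < s := lt_min hr (by linarith [hp.sheetRadius_pos (p x)])
  have hsr : s ≤ sheetRadius p (p x) / 1000 := min_le_right _ _
  set U := connectedComponentIn (p ⁻¹' ball (p x) s) x
  have hUB : U ⊆ p ⁻¹' ball (p x) s := connectedComponentIn_subset _ _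
  refine ⟨U, (isOpen_ball.preimage hp.continuous).connectedComponentIn,
    mem_connectedComponentIn (mem_ball_self hs),
    hUB.trans (preimage_mono (ball_subset_ball (min_le_left _ _))), fun a ha b hb => ?_⟩
  have hxa : dist (p a) (p x) < s := hUB ha
  have hxb : dist (p b) (p x) < s := hUB hb
  have hra := sheetRadius_le_add_dist (p := p) (p x) (p a)
  have hrb := sheetRadius_le_add_dist (p := p) (p x) (p b)
  have hlink : SheetLinked p a b := by
    refine ⟨U, isPreconnected_connectedComponentIn, ha, hb, ?_⟩
    rintro _ ⟨c, hc, rfl⟩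
    have hxc : dist (p c) (p x) < s := hUB hc
    constructor <;> rw [mem_closedBall] <;>
      linarith [dist_triangle (p c) (p x) (p a), dist_triangle (p c) (p x) (p b),
        dist_comm (p x) (p a), dist_comm (p x) (p b)]
  have hle := liftDist_le_dist_of_sheetLinked hlink
  refine le_antisymm hle (exists_isPreconnected_of_liftDist_lt (hle.trans_lt ?_)).2
  linarith [dist_triangle (p a) (p x) (p b), dist_comm (p x) (p a), dist_comm (p x) (p b)]

theorem IsCoveringMap.isOpen_iff_liftDist (hp : IsCoveringMap p) (s : Set E) :
    IsOpen s ↔ ∀ a ∈ s, ∃ ε > 0, {b | liftDist p a b < ε} ⊆ s := by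
  constructor
  · intro hs a ha
    have hr := hp.sheetRadius_pos (p a)
    set B := ball (p a) (sheetRadius p (p a) / 2)
    set O := connectedComponentIn (s ∩ p ⁻¹' B) a
    have haO : a ∈ O := mem_connectedComponentIn ⟨ha, mem_ball_self (half_pos hr)⟩
    have hOs : O ⊆ s ∩ p ⁻¹' B := connectedComponentIn_subset _ _
    obtain ⟨η, hη, hηO⟩ := Metric.isOpen_iff.1
      (hp.isOpenMap _ (hs.inter (isOpen_ball.preimage hp.continuous)).connectedComponentIn)
      (p a) (mem_image_of_mem p haO)
    refine ⟨min η (sheetRadius p (p a) / 100), lt_min hη (by positivity), fun b hb => ?_⟩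
    obtain ⟨⟨K, hK, haK, hbK, hKB⟩, hab⟩ :=
      exists_isPreconnected_of_liftDist_lt (lt_of_lt_of_le hb (min_le_right _ _))
    obtain ⟨b', hb'O, hpb'⟩ : p b ∈ p '' O :=
      hηO (by rw [mem_ball, dist_comm]; exact hab.trans_lt (lt_of_lt_of_le hb (min_le_left _ _)))
    have hKO : IsPreconnected (K ∪ O) := hK.union a haK haO isPreconnected_connectedComponentIn
    have := injOnPreconnectedOver_ball_of_lt_sheetRadius (half_lt_self hr) hKO
      (union_subset hKB (hOs.trans inter_subset_right)) (.inr hb'O) (.inl hbK) hpb'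
    exact this ▸ (hOs hb'O).1
  · intro h
    refine isOpen_iff_forall_mem_open.2 fun a ha => ?_
    obtain ⟨ε, hε, hεs⟩ := h a ha
    obtain ⟨U, hU, haU, hUB, hUd⟩ := hp.exists_isOpen_forall_liftDist_eq a hε
    refine ⟨U, fun b hb => hεs ?_, hU, haU⟩
    rw [mem_ofPred, hUd a haU b hb, dist_comm]
    exact hUB hb

end LiftDist

theorem stmt4_general {G' G E X : Type*} [Group G'] [Group G]
    [TopologicalSpace E] [MetricSpace X] [LocallyConnectedSpace X]
    [MulAction G X]
    [MulAction G' E] [ContinuousConstSMul G' E]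
    (φ : G' →* G)
    (p : E → X) (hcov : IsCoveringMap p)
    (hequiv : ∀ (g : G') (x : E), p (g • x) = φ g • p x)
    (hinv : ∀ (g : G) (a b : X), dist (g • a) (g • b) = dist a b) :
    ∃ ρ : E → E → ℝ,
      (∀ a b : E, 0 ≤ ρ a b) ∧
      (∀ a b : E, ρ a b = 0 ↔ a = b) ∧
      (∀ a b : E, ρ a b = ρ b a) ∧
      (∀ a b c : E, ρ a c ≤ ρ a b + ρ b c) ∧
      (∀ (g : G') (a b : E), ρ (g • a) (g • b) = ρ a b) ∧
      (∀ s : Set E, IsOpen s ↔ ∀ a ∈ s, ∃ ε > 0, {b : E | ρ a b < ε} ⊆ s) ∧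
      (∀ x : E, ∃ U : Set E, IsOpen U ∧ x ∈ U ∧
        ∀ a ∈ U, ∀ b ∈ U, dist (p a) (p b) = ρ a b) := by
  let _ : MulAction G' X := MulAction.compHom X φ
  have : IsIsometricSMul G' X := ⟨fun g => Isometry.of_dist_eq (hinv (φ g))⟩
  have : LocallyConnectedSpace E := hcov.isLocalHomeomorph.locallyConnectedSpace
  refine ⟨liftDist p, @dist_nonneg E (liftPseudoMetric p),
    fun a b => ⟨hcov.eq_of_liftDist_eq_zero, fun h => h ▸ @dist_self E (liftPseudoMetric p) a⟩,
    @dist_comm E (liftPseudoMetric p), @dist_triangle E (liftPseudoMetric p), liftDist_smul hequiv,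
    hcov.isOpen_iff_liftDist, fun x => ?_⟩
  obtain ⟨U, hU, hxU, -, hUd⟩ := hcov.exists_isOpen_forall_liftDist_eq x one_pos
  exact ⟨U, hU, hxU, fun a ha b hb => (hUd a ha b hb).symm⟩

/-- For a covering in the category of spaces with group actions, any invariant metric
on the base lifts to an invariant metric on the total space making the projection a
local isometry. -/
theorem stmt4 {G' G E X : Type*} [Group G'] [Group G]
    [TopologicalSpace E] [MetricSpace X] [ConnectedSpace E] [LocallyConnectedSpace X]
    [MulAction G X] [ContinuousConstSMul G X]
    [MulAction G' E] [ContinuousConstSMul G' E]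
    (φ : G' →* G) (hφ : Function.Surjective φ)
    (p : E → X) (hcov : IsCoveringMap p)
    (hequiv : ∀ (g : G') (x : E), p (g • x) = φ g • p x)
    (hinv : ∀ (g : G) (a b : X), dist (g • a) (g • b) = dist a b) :
    ∃ ρ : E → E → ℝ,
      (∀ a b : E, 0 ≤ ρ a b) ∧
      (∀ a b : E, ρ a b = 0 ↔ a = b) ∧
      (∀ a b : E, ρ a b = ρ b a) ∧
      (∀ a b c : E, ρ a c ≤ ρ a b + ρ b c) ∧
      (∀ (g : G') (a b : E), ρ (g • a) (g • b) = ρ a b) ∧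
      (∀ s : Set E, IsOpen s ↔ ∀ a ∈ s, ∃ ε > 0, {b : E | ρ a b < ε} ⊆ s) ∧
      (∀ x : E, ∃ U : Set E, IsOpen U ∧ x ∈ U ∧
        ∀ a ∈ U, ∀ b ∈ U, dist (p a) (p b) = ρ a b) :=
  stmt4_general φ p hcov hequiv hinv
end

section
/- Let X be a metrizable, locally compact and locally connected topological space and let G be a countable discrete group acting by homeomorphisms on X such that the orbit space X/G is Hausdorff. Then every orbit Gx is a discrete subset of X, and every point x ∈ X has a neighbourhood base consisting of connected, G_x-invariant open sets. -/
open Pointwise MulAction Set Topology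

/-!
Since `X/G` is Hausdorff, orbits are closed, hence locally compact; being countable, an orbit
has an isolated point by Baire's theorem, and then every point of it is isolated by homogeneity.

For the neighbourhoods, take an open `V₀ ∋ x` inside `U` whose frontier is compact and misses
`G • x`. The image of this frontier in `X/G` is compact, hence closed, and does not contain the
class of `x`; its preimage complement is a `G`-invariant open neighbourhood `W` of `x` avoiding
`frontier V₀`. For a connected open `C ∋ x` inside `W ∩ V₀`, every translate `g • C` with
`g • x = x` is connected, contains `x` and misses `frontier V₀`, so lies in `V₀`; the union of
these translates is the required neighbourhood.
-/

theorem IsPreconnected.subset_of_disjoint_frontier {X : Type*} [TopologicalSpace X]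
    {s u : Set X} (hs : IsPreconnected s) (hu : IsOpen u) (hsu : (s ∩ u).Nonempty)
    (hsf : Disjoint s (frontier u)) : s ⊆ u := by
  refine hs.subset_of_closure_inter_subset hu hsu fun y ⟨hyc, hys⟩ => ?_
  by_contra hyu
  exact hsf.notMem_of_mem_left hys ⟨hyc, by rwa [hu.interior_eq]⟩

theorem IsPreconnected.smul_set {M X : Type*} [TopologicalSpace X] [SMul M X]
    [ContinuousConstSMul M X] {s : Set X} (hs : IsPreconnected s) (c : M) :
    IsPreconnected (c • s) := by
  rw [← image_smul]
  exact hs.image _ (continuous_const_smul c).continuousOn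

theorem BaireSpace.exists_isOpen_singleton_of_countable {Y : Type*} [TopologicalSpace Y]
    [BaireSpace Y] [T1Space Y] [Countable Y] [Nonempty Y] : ∃ a : Y, IsOpen ({a} : Set Y) := by
  obtain ⟨a, ha⟩ := nonempty_interior_of_iUnion_of_closed (fun a : Y => isClosed_singleton)
    (iUnion_of_singleton Y)
  exact ⟨a, ha.subset_singleton_iff.1 interior_subset ▸ isOpen_interior⟩

theorem IsPretransitive.discreteTopology_of_isOpen_singleton {G Y : Type*} [Group G]
    [TopologicalSpace Y] [MulAction G Y] [IsPretransitive G Y] [ContinuousConstSMul G Y] {a : Y}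
    (ha : IsOpen ({a} : Set Y)) : DiscreteTopology Y := by
  refine discreteTopology_iff_isOpen_singleton.2 fun b => ?_
  obtain ⟨g, rfl⟩ := exists_smul_eq G a b
  simpa using ha.smul g

theorem exists_isOpen_isCompact_frontier_disjoint {X : Type*} [TopologicalSpace X] [T2Space X]
    [LocallyCompactSpace X] {S U : Set X} [DiscreteTopology S] {x : X} (hxS : x ∈ S)
    (hU : IsOpen U) (hxU : x ∈ U) :
    ∃ V, IsOpen V ∧ x ∈ V ∧ V ⊆ U ∧ IsCompact (frontier V) ∧
      Disjoint (frontier V) S := by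
  obtain ⟨O, hO, hOx⟩ := isOpen_induced_iff.1 (isOpen_discrete {(⟨x, hxS⟩ : S)})
  have hxO : (⟨x, hxS⟩ : S) ∈ Subtype.val ⁻¹' O := hOx ▸ rfl
  obtain ⟨K, hK, hxK, hKOU⟩ := exists_compact_subset (hO.inter hU) ⟨hxO, hxU⟩
  have hfK : frontier (interior K) ⊆ K :=
    frontier_subset_closure.trans (closure_minimal interior_subset hK.isClosed)
  refine ⟨interior K, isOpen_interior, hxK, interior_subset.trans fun y hy => (hKOU hy).2,
    hK.of_isClosed_subset isClosed_frontier hfK, disjoint_left.2 fun z hzf hzS => ?_⟩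
  have hzx : (⟨z, hzS⟩ : S) = ⟨x, hxS⟩ := by
    rw [← mem_singleton_iff, ← hOx]
    exact (hKOU (hfK hzf)).1
  rw [isOpen_interior.frontier_eq] at hzf
  obtain rfl : z = x := congrArg Subtype.val hzx
  exact hzf.2 hxK

theorem Subgroup.smul_iUnion_smul_of_mem {G X : Type*} [Group G] [MulAction G X]
    (H : Subgroup G) (C : Set X) {h : G} (hh : h ∈ H) :
    h • ⋃ g : H, (g : G) • C = ⋃ g : H, (g : G) • C := by
  simp_rw [smul_set_iUnion, smul_smul]
  exact (Equiv.mulLeft (⟨h, hh⟩ : H)).surjective.iUnion_comp fun g : H => (g : G) • C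

section

variable {G X : Type*} [Group G] [TopologicalSpace X] [MulAction G X]

theorem MulAction.isClosed_orbit_s9 [T1Space (Quotient (orbitRel G X))] (x : X) :
    IsClosed (orbit G x) := by
  have : orbit G x = Quotient.mk (orbitRel G X) ⁻¹' {Quotient.mk (orbitRel G X) x} := by
    ext y
    simp only [mem_preimage, mem_singleton_iff, Quotient.eq, orbitRel_apply]
  rw [this]
  exact isClosed_singleton.preimage continuous_quotient_mk'

instance MulAction.continuousConstSMul_orbit [ContinuousConstSMul G X] (x : X) :
    ContinuousConstSMul G (orbit G x) :=
  ⟨fun g => ((continuous_const_smul g).comp continuous_subtype_val).subtype_mk _⟩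

theorem MulAction.discreteTopology_orbit [Countable G] [T2Space X] [LocallyCompactSpace X]
    [ContinuousConstSMul G X] [T1Space (Quotient (orbitRel G X))] (x : X) :
    DiscreteTopology (orbit G x) := by
  have : LocallyCompactSpace (orbit G x) := (isClosed_orbit_s9 x).locallyCompactSpace
  have : Countable (orbit G x) := (countable_range fun g : G => g • x).to_subtype
  have : Nonempty (orbit G x) := ⟨⟨x, mem_orbit_self x⟩⟩
  obtain ⟨a, ha⟩ := BaireSpace.exists_isOpen_singleton_of_countable (Y := orbit G x)
  exact IsPretransitive.discreteTopology_of_isOpen_singleton (G := G) ha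

theorem MulAction.exists_isOpen_forall_disjoint_smul [T2Space (Quotient (orbitRel G X))]
    {F : Set X} (hF : IsCompact F) {x : X} (hx : Disjoint F (orbit G x)) :
    ∃ W, IsOpen W ∧ x ∈ W ∧ ∀ g : G, Disjoint (g • W) F := by
  set p : X → Quotient (orbitRel G X) := Quotient.mk _
  have hp : Continuous p := continuous_quotient_mk'
  have hp_smul (g : G) (y : X) : p (g • y) = p y := Quotient.sound ⟨g, rfl⟩
  refine ⟨p ⁻¹' (p '' F)ᶜ, ((hF.image hp).isClosed.isOpen_compl).preimage hp, ?_, ?_⟩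
  · rintro ⟨z, hzF, hzx⟩
    exact hx.notMem_of_mem_left hzF (orbitRel_apply.1 (Quotient.exact hzx))
  · refine fun g => disjoint_left.2 ?_
    rintro _ ⟨y, hyW, rfl⟩ hyF
    exact hyW ⟨g • y, hyF, hp_smul g y⟩

theorem exists_isConnected_invariant_of_forall_smul_subset [ContinuousConstSMul G X]
    {x : X} {C U : Set X} (hC : IsOpen C) (hxC : x ∈ C) (hCc : IsPreconnected C)
    (hCU : ∀ g ∈ stabilizer G x, g • C ⊆ U) :
    ∃ V : Set X, IsOpen V ∧ x ∈ V ∧ V ⊆ U ∧ IsConnected V ∧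
      ∀ g : G, g • x = x → g • V = V := by
  have hx (g : stabilizer G x) : x ∈ (g : G) • C := by
    simpa [mem_stabilizer_iff.1 g.2] using smul_mem_smul_set (a := (g : G)) hxC
  refine ⟨⋃ g : stabilizer G x, (g : G) • C, isOpen_iUnion fun g => hC.smul _,
    mem_iUnion.2 ⟨1, hx 1⟩, iUnion_subset fun g => hCU g g.2,
    ⟨⟨x, mem_iUnion.2 ⟨1, hx 1⟩⟩, isPreconnected_iUnion ⟨x, mem_iInter.2 hx⟩
      fun g => hCc.smul_set _⟩,
    fun g hg => (stabilizer G x).smul_iUnion_smul_of_mem C hg⟩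

end

/-- For a countable discrete group acting on a metrizable, locally compact and locally
connected space with Hausdorff orbit space, every orbit is discrete and every point has
a neighbourhood base of connected, stabilizer-invariant open sets. -/
theorem stmt9 {G X : Type*} [Group G] [Countable G] [TopologicalSpace X]
    [TopologicalSpace.MetrizableSpace X] [LocallyCompactSpace X]
    [LocallyConnectedSpace X] [MulAction G X] [ContinuousConstSMul G X]
    [T2Space (Quotient (MulAction.orbitRel G X))] :
    (∀ x : X, DiscreteTopology ↥(MulAction.orbit G x)) ∧
    (∀ (x : X) (U : Set X), x ∈ U → IsOpen U →
      ∃ V : Set X, IsOpen V ∧ x ∈ V ∧ V ⊆ U ∧ IsConnected V ∧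
        ∀ g : G, g • x = x → g • V = V) := by
  refine ⟨discreteTopology_orbit, fun x U hxU hU => ?_⟩
  have := discreteTopology_orbit (G := G) x
  obtain ⟨V₀, hV₀, hxV₀, hV₀U, hfc, hfd⟩ :=
    exists_isOpen_isCompact_frontier_disjoint (S := orbit G x) (mem_orbit_self x) hU hxU
  obtain ⟨W, hW, hxW, hWf⟩ := exists_isOpen_forall_disjoint_smul (G := G) hfc hfd
  obtain ⟨C, ⟨hC, hxC, hCc⟩, hCWV⟩ :=
    (LocallyConnectedSpace.open_connected_basis x).mem_iff.1
      ((hW.inter hV₀).mem_nhds ⟨hxW, hxV₀⟩)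
  refine exists_isConnected_invariant_of_forall_smul_subset hC hxC hCc.isPreconnected
    fun g hg => ?_
  have hxgC : x ∈ g • C := mem_stabilizer_iff.1 hg ▸ smul_mem_smul_set hxC
  exact ((hCc.isPreconnected.smul_set g).subset_of_disjoint_frontier hV₀ ⟨x, hxgC, hxV₀⟩
    ((hWf g).mono_left (smul_set_mono (hCWV.trans inter_subset_left)))).trans hV₀U
end

section
/- Let X be a metrizable, locally compact and locally connected topological space and let G be a countable discrete group acting by homeomorphisms on X such that the orbit space X/G is Hausdorff. Then there exists a family {U_x}_{x∈X} of connected, G_x-invariant open sets with x ∈ U_x for every x, satisfying: (i) U_{gx} = gU_x for every x ∈ X and g ∈ G; (ii) if U_x ∩ U_{gx} ≠ ∅ then g ∈ G_x. -/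
open Pointwise Set MulAction

private lemma stmt10_core {G X : Type*} [Group G] [Countable G] [TopologicalSpace X]
    [TopologicalSpace.MetrizableSpace X] [LocallyCompactSpace X]
    [LocallyConnectedSpace X] [MulAction G X] [ContinuousConstSMul G X]
    [T2Space (Quotient (MulAction.orbitRel G X))] (x : X) :
    ∃ C : Set X, x ∈ C ∧ IsOpen C ∧ IsConnected C ∧
      (∀ g : G, g • x = x → g • C = C) ∧
      (∀ g : G, (C ∩ g • C).Nonempty → g • x = x) := by
  classical
  set p : X → Quotient (MulAction.orbitRel G X) := Quotient.mk (MulAction.orbitRel G X) with hpdef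
  have hpc : Continuous p := continuous_quot_mk
  have hpeq : ∀ a b : X, p a = p b ↔ a ∈ orbit G b := by
    intro a b
    exact Iff.trans (Quotient.eq (r := MulAction.orbitRel G X)) Iff.rfl
  have hpg : ∀ (g : G) (a : X), p (g • a) = p a := fun g a =>
    (hpeq _ _).2 (mem_orbit a g)
  -- the orbit is closed
  have horbeq : orbit G x = p ⁻¹' {p x} := by
    ext y; simp only [mem_preimage, mem_singleton_iff, hpeq]
  have horbc : IsClosed (orbit G x) := by
    rw [horbeq]; exact isClosed_singleton.preimage hpc
  -- isolated point: an open W with W ∩ orbit = {x}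
  obtain ⟨W, hWopen, hxW, hW⟩ :
      ∃ W : Set X, IsOpen W ∧ x ∈ W ∧ ∀ y ∈ W, y ∈ orbit G x → y = x := by
    haveI : LocallyCompactSpace (orbit G x) :=
      horbc.isClosedEmbedding_subtypeVal.locallyCompactSpace
    haveI : Nonempty (orbit G x) := ⟨⟨x, mem_orbit_self x⟩⟩
    have hclosed : ∀ g : G, IsClosed ({⟨g • x, mem_orbit x g⟩} : Set (orbit G x)) :=
      fun g => isClosed_singleton
    have hunion : ⋃ g : G, ({⟨g • x, mem_orbit x g⟩} : Set (orbit G x)) = univ := by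
      ext ⟨y, hy⟩
      simp only [mem_iUnion, mem_singleton_iff, mem_univ, iff_true]
      obtain ⟨g, rfl⟩ := hy
      exact ⟨g, rfl⟩
    obtain ⟨g, z, hz⟩ := nonempty_interior_of_iUnion_of_closed hclosed hunion
    have hz' : z = ⟨g • x, mem_orbit x g⟩ := mem_singleton_iff.mp (interior_subset hz)
    subst hz'
    have hop : IsOpen ({(⟨g • x, mem_orbit x g⟩ : orbit G x)} : Set (orbit G x)) := by
      have h1 : ({(⟨g • x, mem_orbit x g⟩ : orbit G x)} : Set (orbit G x))
          ⊆ interior {(⟨g • x, mem_orbit x g⟩ : orbit G x)} := by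
        intro w hw
        rw [mem_singleton_iff] at hw
        subst hw; exact hz
      rw [← subset_antisymm interior_subset h1]
      exact isOpen_interior
    rw [isOpen_induced_iff] at hop
    obtain ⟨U, hUopen, hU⟩ := hop
    have hgU : g • x ∈ U := by
      have : (⟨g • x, mem_orbit x g⟩ : orbit G x) ∈ Subtype.val ⁻¹' U := by
        rw [hU]; rfl
      exact this
    refine ⟨(fun y => g • y) ⁻¹' U, hUopen.preimage (continuous_const_smul g), hgU, ?_⟩
    intro y hyU hyorb
    have hgy : g • y ∈ orbit G x := by
      obtain ⟨h, rfl⟩ := hyorb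
      rw [smul_smul]; exact mem_orbit x (g * h)
    have : (⟨g • y, hgy⟩ : orbit G x) ∈ Subtype.val ⁻¹' U := hyU
    rw [hU, mem_singleton_iff] at this
    have : g • y = g • x := congrArg Subtype.val this
    exact smul_left_cancel g this
  -- compact neighborhood inside W
  obtain ⟨K, hKnhds, hKW, hKcomp⟩ := local_compact_nhds (hWopen.mem_nhds hxW)
  have hxintK : x ∈ interior K := mem_interior_iff_mem_nhds.2 hKnhds
  -- the invariant open set A
  have hFcomp : IsCompact (K \ interior K) := hKcomp.diff isOpen_interior
  have hpFclosed : IsClosed (p '' (K \ interior K)) := (hFcomp.image hpc).isClosed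
  set A : Set X := p ⁻¹' (p '' (K \ interior K))ᶜ with hAdef
  have hAopen : IsOpen A := hpFclosed.isOpen_compl.preimage hpc
  have hxA : x ∈ A := by
    intro hx
    obtain ⟨y, hyF, hyp⟩ := hx
    have hyorb : y ∈ orbit G x := (hpeq y x).1 hyp
    have : y = x := hW y (hKW hyF.1) hyorb
    subst this
    exact hyF.2 hxintK
  have hAsat : ∀ (g : G) (y : X), g • y ∈ A ↔ y ∈ A := by
    intro g y
    simp only [hAdef, mem_preimage, hpg]
  have hAK : ∀ y ∈ A, y ∈ K → y ∈ interior K := by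
    intro y hyA hyK
    by_contra h
    exact hyA ⟨y, ⟨hyK, h⟩, rfl⟩
  -- the component
  set C : Set X := connectedComponentIn A x with hCdef
  have hxC : x ∈ C := mem_connectedComponentIn hxA
  have hCsubA : C ⊆ A := connectedComponentIn_subset A x
  have hCconn : IsConnected C := isConnected_connectedComponentIn_iff.2 hxA
  have hCsub : C ⊆ interior K := by
    apply hCconn.isPreconnected.subset_left_of_subset_union isOpen_interior
      hKcomp.isClosed.isOpen_compl
      (disjoint_compl_right.mono_left interior_subset)
    · intro y hy
      by_cases hyK : y ∈ K
      · exact Or.inl (hAK y (hCsubA hy) hyK)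
      · exact Or.inr hyK
    · exact ⟨x, hxC, hxintK⟩
  have hCW : C ⊆ W := fun y hy => hKW (interior_subset (hCsub hy))
  -- equivariance of components
  have hsub : ∀ (g : G) (y : X), g • connectedComponentIn A y ⊆ connectedComponentIn A (g • y) := by
    intro g y
    by_cases hyA : y ∈ A
    · apply IsPreconnected.subset_connectedComponentIn
      · have himg : g • connectedComponentIn A y = (fun z => g • z) '' connectedComponentIn A y :=
          rfl
        rw [himg]
        exact isPreconnected_connectedComponentIn.image _ (continuous_const_smul g).continuousOn
      · exact smul_mem_smul_set (mem_connectedComponentIn hyA)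
      · rintro z ⟨w, hw, rfl⟩
        exact (hAsat g w).2 (connectedComponentIn_subset A y hw)
    · rw [connectedComponentIn_eq_empty hyA, smul_set_empty]
      exact empty_subset _
  have heq : ∀ (g : G) (y : X), g • connectedComponentIn A y = connectedComponentIn A (g • y) := by
    intro g y
    apply subset_antisymm (hsub g y)
    have h2 := hsub g⁻¹ (g • y)
    rw [inv_smul_smul] at h2
    calc connectedComponentIn A (g • y)
        = g • (g⁻¹ • connectedComponentIn A (g • y)) := (smul_inv_smul g _).symm
      _ ⊆ g • connectedComponentIn A y := smul_set_mono h2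
  refine ⟨C, hxC, hAopen.connectedComponentIn, hCconn, ?_, ?_⟩
  · intro g hg
    rw [hCdef, heq g x, hg]
  · rintro g ⟨z, hz1, hz2⟩
    rw [hCdef, heq g x] at hz2
    have h1 : connectedComponentIn A x = connectedComponentIn A z := connectedComponentIn_eq hz1
    have h2 : connectedComponentIn A (g • x) = connectedComponentIn A z :=
      connectedComponentIn_eq hz2
    have hgxC : g • x ∈ C := by
      rw [hCdef, h1, ← h2]
      exact mem_connectedComponentIn ((hAsat g x).2 hxA)
    exact hW _ (hCW hgxC) (mem_orbit x g)

/-- For a countable discrete group acting on a metrizable, locally compact and locally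
connected space with Hausdorff orbit space, there exists an equivariant family of
connected, stabilizer-invariant open sets `U_x ∋ x` such that `U_x` meets `U_{gx}` only
when `g` stabilizes `x`. -/
theorem stmt10 {G X : Type*} [Group G] [Countable G] [TopologicalSpace X]
    [TopologicalSpace.MetrizableSpace X] [LocallyCompactSpace X]
    [LocallyConnectedSpace X] [MulAction G X] [ContinuousConstSMul G X]
    [T2Space (Quotient (MulAction.orbitRel G X))] :
    ∃ U : X → Set X,
      (∀ x : X, x ∈ U x) ∧
      (∀ x : X, IsOpen (U x)) ∧
      (∀ x : X, IsConnected (U x)) ∧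
      (∀ (x : X) (g : G), g • x = x → g • U x = U x) ∧
      (∀ (x : X) (g : G), U (g • x) = g • U x) ∧
      (∀ (x : X) (g : G), (U x ∩ U (g • x)).Nonempty → g • x = x) := by
  classical
  choose C hmem hopen hconn hstab hwand using fun x : X => stmt10_core (G := G) x
  set r : X → X := fun x => (Quotient.mk (MulAction.orbitRel G X) x).out with hrdef
  have hr : ∀ x : X, ∃ g : G, g • r x = x := by
    intro x
    have h1 : r x ∈ orbit G x := Quotient.mk_out (s := MulAction.orbitRel G X) x
    obtain ⟨h, hh⟩ := h1
    exact ⟨h⁻¹, by rw [← hh, inv_smul_smul]⟩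
  choose σ hσ using hr
  have hrinv : ∀ (g : G) (x : X), r (g • x) = r x := by
    intro g x
    simp only [hrdef]
    congr 1
    exact Quotient.sound (mem_orbit x g)
  have hkey : ∀ (x : X) (a b : G), a • r x = b • r x → a • C (r x) = b • C (r x) := by
    intro x a b hab
    have h1 : (b⁻¹ * a) • r x = r x := by rw [mul_smul, hab, inv_smul_smul]
    have h2 := hstab (r x) _ h1
    calc a • C (r x) = b • ((b⁻¹ * a) • C (r x)) := by
          rw [smul_smul, mul_inv_cancel_left]
      _ = b • C (r x) := by rw [h2]
  have hv : ∀ (x : X) (g : G), σ (g • x) • C (r (g • x)) = g • (σ x • C (r x)) := by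
    intro x g
    rw [hrinv g x, smul_smul]
    apply hkey
    rw [mul_smul, hσ x]
    have := hσ (g • x)
    rw [hrinv g x] at this
    exact this
  refine ⟨fun x => σ x • C (r x), ?_, ?_, ?_, ?_, ?_, ?_⟩
  · intro x
    have h := smul_mem_smul_set (a := σ x) (hmem (r x))
    rwa [hσ x] at h
  · intro x
    exact (hopen (r x)).smul (σ x)
  · intro x
    show IsConnected (σ x • C (r x))
    have himg : σ x • C (r x) = (fun y => σ x • y) '' C (r x) := rfl
    rw [himg]
    exact (hconn (r x)).image _ (continuous_const_smul _).continuousOn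
  · intro x g hg
    rw [← hv x g, hg]
  · intro x g
    exact hv x g
  · intro x g hne
    obtain ⟨z, hz1, hz2⟩ := hne
    change z ∈ σ x • C (r x) at hz1
    change z ∈ σ (g • x) • C (r (g • x)) at hz2
    rw [hv x g] at hz2
    have h1 : (σ x)⁻¹ • z ∈ C (r x) := by
      obtain ⟨w, hw, rfl⟩ := hz1
      rwa [inv_smul_smul]
    have h2 : (σ x)⁻¹ • z ∈ ((σ x)⁻¹ * g * σ x) • C (r x) := by
      rw [smul_smul] at hz2
      obtain ⟨w, hw, rfl⟩ := hz2
      show (σ x)⁻¹ • (g * σ x) • w ∈ _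
      have hww : (σ x)⁻¹ • (g * σ x) • w = ((σ x)⁻¹ * g * σ x) • w := by
        rw [smul_smul]
        congr 1
        group
      rw [hww]
      exact smul_mem_smul_set hw
    have h3 := hwand (r x) ((σ x)⁻¹ * g * σ x) ⟨_, h1, h2⟩
    calc g • x = g • (σ x • r x) := by rw [hσ]
      _ = σ x • (((σ x)⁻¹ * g * σ x) • r x) := by
          rw [smul_smul, smul_smul]
          congr 1
          group
      _ = σ x • r x := by rw [h3]
      _ = x := hσ x
end

section
/- Let X be a locally compact, locally connected, metrizable and connected topological space and let G be a countable group acting by homeomorphisms on X such that the orbit space X/G is Hausdorff. Then either the stabilizer G_x is finite for every x ∈ X, or the stabilizer G_x is infinite for every x ∈ X. -/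
set_option linter.unusedSectionVars false

open MulAction Set Filter Topology TopologicalSpace Pointwise

section StabilizerDichotomyAux

variable {G X : Type*} [Group G] [TopologicalSpace X] [MulAction G X] [ContinuousConstSMul G X]

private lemma stmt18_mk_eq_iff (x y : X) :
    Quotient.mk (MulAction.orbitRel G X) x = Quotient.mk _ y ↔ x ∈ orbit G y := by
  rw [Quotient.eq]
  exact MulAction.orbitRel_apply

/-- Orbits are closed when the orbit space is T2. -/
private lemma stmt18_orbit_closed [T2Space (Quotient (MulAction.orbitRel G X))] (b : X) :
    IsClosed (orbit G b) := by
  have h : orbit G b = Quotient.mk (MulAction.orbitRel G X) ⁻¹' {Quotient.mk _ b} := by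
    ext y
    simp only [mem_preimage, mem_singleton_iff, stmt18_mk_eq_iff]
  rw [h]
  exact (isClosed_singleton).preimage continuous_quotient_mk'

/-- Points of orbits are isolated in their orbit: orbits are discrete. -/
private lemma stmt18_orbit_isolated [T2Space X] [LocallyCompactSpace X] [Countable G]
    [T2Space (Quotient (MulAction.orbitRel G X))] (b z : X) (hz : z ∈ orbit G b) :
    ∃ U : Set X, IsOpen U ∧ U ∩ orbit G b = {z} := by
  have horb : IsClosed (orbit G b) := stmt18_orbit_closed b
  haveI : LocallyCompactSpace (orbit G b) := horb.locallyCompactSpace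
  haveI : Nonempty (orbit G b) := ⟨⟨b, mem_orbit_self b⟩⟩
  -- Baire: some orbit point is isolated
  have hcover : (⋃ g : G, ({⟨g • b, mem_orbit b g⟩} : Set (orbit G b))) = univ := by
    ext ⟨y, hy⟩
    simp only [mem_univ, iff_true, mem_iUnion, mem_singleton_iff]
    obtain ⟨g, hg⟩ := MulAction.mem_orbit_iff.mp hy
    exact ⟨g, by simp [hg]⟩
  obtain ⟨g₀, x₀, hx₀⟩ :=
    nonempty_interior_of_iUnion_of_closed (fun g : G => isClosed_singleton) hcover
  have hx₀eq : x₀ = ⟨g₀ • b, mem_orbit b g₀⟩ := mem_singleton_iff.mp (interior_subset hx₀)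
  have hint : interior ({⟨g₀ • b, mem_orbit b g₀⟩} : Set (orbit G b)) =
      ({⟨g₀ • b, mem_orbit b g₀⟩} : Set (orbit G b)) := by
    refine Subset.antisymm interior_subset ?_
    intro y hy
    rw [mem_singleton_iff] at hy
    have hx₀' := hx₀
    rw [hx₀eq] at hx₀'
    rw [hy]
    exact hx₀'
  have hopen : IsOpen ({⟨g₀ • b, mem_orbit b g₀⟩} : Set (orbit G b)) := by
    rw [← hint]; exact isOpen_interior
  -- transfer to an open set of X
  obtain ⟨W, hWo, hW⟩ := isOpen_induced_iff.mp hopen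
  have hW' : W ∩ orbit G b = {g₀ • b} := by
    apply Subset.antisymm
    · rintro x ⟨hxW, hxo⟩
      have : (⟨x, hxo⟩ : orbit G b) ∈ (Subtype.val ⁻¹' W : Set (orbit G b)) := hxW
      rw [hW, mem_singleton_iff] at this
      simpa using congrArg Subtype.val this
    · rintro x hx
      rw [mem_singleton_iff] at hx
      subst hx
      have : (⟨g₀ • b, mem_orbit b g₀⟩ : orbit G b) ∈ (Subtype.val ⁻¹' W : Set (orbit G b)) := by
        rw [hW]; rfl
      exact ⟨this, mem_orbit b g₀⟩
  -- translate the isolated point to z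
  obtain ⟨g₁, hg₁⟩ := MulAction.mem_orbit_iff.mp hz
  refine ⟨(g₁ * g₀⁻¹) • W, hWo.smul _, ?_⟩
  have horbsmul : (g₁ * g₀⁻¹) • orbit G b = orbit G b := MulAction.smul_orbit _ _
  calc (g₁ * g₀⁻¹) • W ∩ orbit G b
      = (g₁ * g₀⁻¹) • W ∩ (g₁ * g₀⁻¹) • orbit G b := by rw [horbsmul]
    _ = (g₁ * g₀⁻¹) • (W ∩ orbit G b) := (Set.smul_set_inter).symm
    _ = (g₁ * g₀⁻¹) • ({g₀ • b} : Set X) := by rw [hW']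
    _ = {z} := by
        rw [Set.smul_set_singleton, smul_smul, inv_mul_cancel_right, hg₁]

/-- Key local lemma: it is impossible that every neighborhood of `b` contains both a point
with infinite stabilizer and a point with finite stabilizer. -/
private lemma stmt18_core [Countable G] [LocallyCompactSpace X] [LocallyConnectedSpace X]
    [TopologicalSpace.MetrizableSpace X]
    [T2Space (Quotient (MulAction.orbitRel G X))] (b : X)
    (h : ∀ U ∈ 𝓝 b, (∃ p ∈ U, Infinite (stabilizer G p)) ∧ (∃ q ∈ U, Finite (stabilizer G q))) :
    False := by
  -- an isolating compact neighborhood of b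
  obtain ⟨U₀, hU₀o, hU₀⟩ := stmt18_orbit_isolated (G := G) b b (mem_orbit_self b)
  have hbU₀ : b ∈ U₀ := by
    have : b ∈ U₀ ∩ orbit G b := by rw [hU₀]; exact rfl
    exact this.1
  obtain ⟨K, hKc, hbK, hKU₀⟩ := exists_compact_subset hU₀o hbU₀
  obtain ⟨B, hB⟩ := (𝓝 b).exists_antitone_basis
  -- the main per-index construction
  have hdata : ∀ j : ℕ, ∃ u w : X, u ∈ B j ∧ w ∈ frontier K ∧ w ∈ orbit G u := by
    intro j
    have hBj : B j ∈ 𝓝 b := hB.1.mem_of_mem trivial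
    set O : Set X := interior K ∩ interior (B j) with hOdef
    have hOo : IsOpen O := isOpen_interior.inter isOpen_interior
    have hbO : b ∈ O := ⟨hbK, mem_interior_iff_mem_nhds.mpr hBj⟩
    set U : Set X := connectedComponentIn O b with hUdef
    have hUo : IsOpen U := hOo.connectedComponentIn
    have hUconn : IsConnected U := isConnected_connectedComponentIn_iff.mpr hbO
    have hUO : U ⊆ O := connectedComponentIn_subset O b
    have hUnhds : U ∈ 𝓝 b := hUo.mem_nhds (mem_connectedComponentIn hbO)
    obtain ⟨⟨p, hpU, hpinf⟩, ⟨q, hqU, hqfin⟩⟩ := h U hUnhds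
    -- find a stabilizer element of p pushing U out of K
    have key : ∃ s : G, s ∈ stabilizer G p ∧ ¬ s • U ⊆ K := by
      by_contra hcon
      push_neg at hcon
      set f : stabilizer G p → X := fun s => (s : G) • q with hfdef
      have hfK : ∀ s, f s ∈ K := fun s => hcon (s : G) s.2 (smul_mem_smul_set hqU)
      have hforb : ∀ s, f s ∈ orbit G q := fun s => MulAction.mem_orbit q (s : G)
      have hrange_inf : (Set.range f).Infinite := by
        intro hfin
        have hfibers : ∀ v ∈ Set.range f, (f ⁻¹' {v}).Finite := by
          rintro v ⟨s₀, rfl⟩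
          haveI := hqfin
          have hinj : Function.Injective fun s : (f ⁻¹' {f s₀}) =>
              (⟨(s₀ : G)⁻¹ * ((s : stabilizer G p) : G), by
                have hs : f (s : stabilizer G p) = f s₀ := s.2
                have : ((s₀ : G)⁻¹ * ((s : stabilizer G p) : G)) • q = q := by
                  rw [mul_smul]
                  change (s₀ : G)⁻¹ • f (s : stabilizer G p) = q
                  rw [hs]
                  exact inv_smul_smul _ q
                exact MulAction.mem_stabilizer_iff.mpr this⟩ : stabilizer G q) := by
            intro s t hst
            have h1 : (s₀ : G)⁻¹ * ((s : stabilizer G p) : G)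
                = (s₀ : G)⁻¹ * ((t : stabilizer G p) : G) := congrArg Subtype.val hst
            have h2 : ((s : stabilizer G p) : G) = ((t : stabilizer G p) : G) :=
              mul_left_cancel h1
            exact Subtype.ext (Subtype.ext h2)
          have : Finite (f ⁻¹' {f s₀}) := Finite.of_injective _ hinj
          exact Set.finite_coe_iff.mp this
        have huniv : (univ : Set (stabilizer G p)).Finite := by
          have hsub : (univ : Set (stabilizer G p)) ⊆ ⋃ v ∈ Set.range f, f ⁻¹' {v} :=
            fun s _ => mem_biUnion (mem_range_self s) rfl
          exact (hfin.biUnion hfibers).subset hsub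
        haveI := hpinf
        exact Set.infinite_univ huniv
      -- infinitely many orbit points of q inside the compact K : contradiction with discreteness
      let e := hrange_inf.natEmbedding
      have hdK : ∀ n : ℕ, ((e n : Set.range f) : X) ∈ K := by
        intro n
        obtain ⟨s, hs⟩ := (e n).2
        rw [← hs]; exact hfK s
      obtain ⟨z, hzK, φ, hφ, hdz⟩ := hKc.tendsto_subseq hdK
      have hzorb : z ∈ orbit G q := by
        refine (stmt18_orbit_closed (G := G) q).mem_of_tendsto hdz (Eventually.of_forall fun n => ?_)
        obtain ⟨s, hs⟩ := (e (φ n)).2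
        show ((e (φ n) : Set.range f) : X) ∈ orbit G q
        rw [← hs]; exact hforb s
      obtain ⟨V, hVo, hV⟩ := stmt18_orbit_isolated (G := G) q z hzorb
      have hzV : z ∈ V := by
        have : z ∈ V ∩ orbit G q := by rw [hV]; exact rfl
        exact this.1
      have hev : ∀ᶠ n in atTop, ((e (φ n) : Set.range f) : X) ∈ V :=
        hdz.eventually (hVo.eventually_mem hzV)
      obtain ⟨N, hN⟩ := eventually_atTop.mp hev
      have heq : ∀ n, N ≤ n → ((e (φ n) : Set.range f) : X) = z := by
        intro n hn
        have : ((e (φ n) : Set.range f) : X) ∈ V ∩ orbit G q := by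
          refine ⟨hN n hn, ?_⟩
          obtain ⟨s, hs⟩ := (e (φ n)).2
          rw [← hs]; exact hforb s
        rw [hV] at this
        exact this
      have : e (φ N) = e (φ (N + 1)) :=
        Subtype.ext ((heq N le_rfl).trans (heq (N + 1) (Nat.le_succ N)).symm)
      have : φ N = φ (N + 1) := e.injective this
      exact absurd this (ne_of_lt (hφ (Nat.lt_succ_self N)))
    obtain ⟨s, hs, hsnot⟩ := key
    obtain ⟨a, haU, haK⟩ := not_subset.mp hsnot
    -- s • U is connected, meets interior K and the complement of K, so meets the frontier
    have hpsU : p ∈ s • U := by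
      have : s • p ∈ s • U := smul_mem_smul_set hpU
      rwa [MulAction.mem_stabilizer_iff.mp hs] at this
    have hconn : IsPreconnected (s • U) := by
      have : IsConnected ((fun x => s • x) '' U) :=
        hUconn.image _ (continuous_const_smul s).continuousOn
      rw [Set.image_smul] at this
      exact this.isPreconnected
    have hfront : ((s • U) ∩ frontier K).Nonempty := by
      by_contra hemp
      rw [Set.not_nonempty_iff_eq_empty] at hemp
      have hcov : s • U ⊆ interior K ∪ Kᶜ := by
        intro x hx
        by_cases hxK : x ∈ K
        · left
          have hxfr : x ∉ frontier K := by
            intro hxf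
            exact absurd (Set.mem_inter hx hxf) (by rw [hemp]; exact notMem_empty x)
          have : x ∈ closure K := subset_closure hxK
          by_contra hxi
          exact hxfr ⟨this, hxi⟩
        · right; exact hxK
      have hres := hconn (interior K) Kᶜ isOpen_interior (hKc.isClosed.isOpen_compl) hcov
        ⟨p, hpsU, hUO hpU |>.1⟩ ⟨a, haU, haK⟩
      obtain ⟨x, _, hx1, hx2⟩ := hres
      exact hx2 (interior_subset hx1)
    obtain ⟨w, hwsU, hwfr⟩ := hfront
    obtain ⟨u, huU, hwu⟩ := Set.mem_smul_set.mp hwsU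
    refine ⟨u, w, ?_, hwfr, ?_⟩
    · exact interior_subset ((hUO huU).2)
    · rw [← hwu]; exact MulAction.mem_orbit u s
  choose u w hu hwfr hworb using hdata
  have hub : Tendsto u atTop (𝓝 b) := hB.tendsto hu
  have hfrc : IsCompact (frontier K) :=
    hKc.of_isClosed_subset isClosed_frontier hKc.isClosed.frontier_subset
  obtain ⟨z, hzF, φ, hφ, hwz⟩ := hfrc.tendsto_subseq hwfr
  -- pass to the quotient
  have hπ : Continuous (Quotient.mk (MulAction.orbitRel G X)) := continuous_quotient_mk'
  have heq : ∀ n : ℕ, Quotient.mk (MulAction.orbitRel G X) (w n) = Quotient.mk _ (u n) :=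
    fun n => (stmt18_mk_eq_iff (w n) (u n)).mpr (hworb n)
  have h1 : Tendsto (fun n => Quotient.mk (MulAction.orbitRel G X) (u (φ n))) atTop
      (𝓝 (Quotient.mk _ b)) := (hπ.tendsto b).comp (hub.comp hφ.tendsto_atTop)
  have h2 : Tendsto (fun n => Quotient.mk (MulAction.orbitRel G X) (u (φ n))) atTop
      (𝓝 (Quotient.mk _ z)) := by
    have := (hπ.tendsto z).comp hwz
    simpa only [Function.comp_def, heq] using this
  have hbz : Quotient.mk (MulAction.orbitRel G X) b = Quotient.mk _ z :=
    tendsto_nhds_unique h1 h2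
  have hzorb : z ∈ orbit G b := by
    exact (stmt18_mk_eq_iff (G := G) z b).mp hbz.symm
  have hzU₀ : z ∈ U₀ := hKU₀ (hKc.isClosed.frontier_subset hzF)
  have hzb : z = b := by
    have : z ∈ U₀ ∩ orbit G b := ⟨hzU₀, hzorb⟩
    rw [hU₀] at this
    exact this
  rw [hzb] at hzF
  exact hzF.2 hbK

end StabilizerDichotomyAux

/-- For a countable group acting on a locally compact, locally connected, metrizable,
connected space with Hausdorff orbit space, either all stabilizers are finite or all
stabilizers are infinite. -/
theorem stmt18 {G X : Type*} [Group G] [Countable G] [TopologicalSpace X]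
    [LocallyCompactSpace X] [LocallyConnectedSpace X]
    [TopologicalSpace.MetrizableSpace X] [ConnectedSpace X]
    [MulAction G X] [ContinuousConstSMul G X]
    [T2Space (Quotient (MulAction.orbitRel G X))] :
    (∀ x : X, Finite (MulAction.stabilizer G x)) ∨
    (∀ x : X, Infinite (MulAction.stabilizer G x)) := by
  classical
  set S : Set X := {x | Finite (MulAction.stabilizer G x)} with hSdef
  have hopen : IsOpen S := by
    rw [isOpen_iff_mem_nhds]
    intro b hb
    by_contra hnb
    refine stmt18_core b fun U hU => ⟨?_, b, mem_of_mem_nhds hU, hb⟩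
    have hUS : ¬ U ⊆ S := fun hsub => hnb (Filter.mem_of_superset hU hsub)
    obtain ⟨p, hpU, hpS⟩ := not_subset.mp hUS
    exact ⟨p, hpU, not_finite_iff_infinite.mp hpS⟩
  have hopenc : IsOpen Sᶜ := by
    rw [isOpen_iff_mem_nhds]
    intro b hb
    by_contra hnb
    refine stmt18_core b fun U hU => ⟨⟨b, mem_of_mem_nhds hU, not_finite_iff_infinite.mp hb⟩, ?_⟩
    have hUS : ¬ U ⊆ Sᶜ := fun hsub => hnb (Filter.mem_of_superset hU hsub)
    obtain ⟨q, hqU, hqS⟩ := not_subset.mp hUS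
    exact ⟨q, hqU, not_not.mp hqS⟩
  have hclopen : IsClopen S := ⟨isOpen_compl_iff.mp hopenc, hopen⟩
  rcases isClopen_iff.mp hclopen with hemp | huniv
  · right
    intro x
    refine not_finite_iff_infinite.mp fun hfin => ?_
    have : x ∈ S := hfin
    rw [hemp] at this
    exact this
  · left
    intro x
    have : x ∈ S := by rw [huniv]; trivial
    exact this
end
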